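/- arXiv:2305.09085 — 4 statements merged into one kernel-verified Lean document; each statement's English description precedes it below -/
import Mathlib

section
/- Steklov's inequality: let L > 0 and let v : [0,L] → ℝ be continuous on [0,L], continuously differentiable on (0,L) with v' square-integrable, and satisfy v(0) = v(L) = 0. Then (π²/L²) ∫₀ᴸ v(x)² dx ≤ ∫₀ᴸ v'(x)² dx. -/
/-!
Fix `u` with `u a = 0` and put `k = π / (2 (b - a))`. The function
`G x = k cot (k (x - a)) u(x)²` satisfies `u'² - k² u² - G' = (u' - k cot (k (x - a)) u)² ≥ 0`
on `(a, b)`, and `G` vanishes at both ends: at `b` because `cot (π / 2) = 0`, and at `a` because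
`0 ≤ G x ≤ u(x)² / (x - a) ≤ ∫ₐˣ u'²` by Cauchy–Schwarz. Integrating `G' ≤ u'² - k² u²` gives
`k² ∫ₐᵇ u² ≤ ∫ₐᵇ u'²`, Wirtinger's inequality with one fixed endpoint. Steklov's inequality follows
by applying it to the two halves of the interval, the right half after the reflection
`x ↦ a + b - x`.
-/

open MeasureTheory Set Filter Topology Real

theorem Real.hasDerivAt_cot {x : ℝ} (hx : sin x ≠ 0) : HasDerivAt cot (-(1 + cot x ^ 2)) x := by
  have h := (hasDerivAt_cos x).div (hasDerivAt_sin x) hx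
  rw [show cos / sin = cot from funext fun y => (cot_eq_cos_div_sin y).symm] at h
  refine h.congr_deriv ?_
  rw [cot_eq_cos_div_sin]
  field_simp
  ring

theorem Real.mul_cot_le_one {t : ℝ} (ht : 0 < t) (ht' : t ≤ π / 2) : t * cot t ≤ 1 := by
  rcases ht'.lt_or_eq with ht' | rfl
  · have := lt_tan ht ht'
    rw [cot_eq_cos_div_sin]
    rw [tan_eq_sin_div_cos, lt_div_iff₀ (cos_pos_of_mem_Ioo ⟨by linarith, ht'⟩)] at this
    rw [mul_div_assoc', div_le_one (sin_pos_of_pos_of_lt_pi ht (by linarith))]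
    linarith
  · simp [cot_eq_cos_div_sin]

theorem Real.cot_nonneg {t : ℝ} (ht : 0 ≤ t) (ht' : t ≤ π / 2) : 0 ≤ cot t := by
  rw [cot_eq_cos_div_sin]
  exact div_nonneg (cos_nonneg_of_mem_Icc ⟨by linarith [pi_pos], ht'⟩)
    (sin_nonneg_of_nonneg_of_le_pi ht (by linarith [pi_pos]))

variable {a b : ℝ} {u u' : ℝ → ℝ}

theorem sq_intervalIntegral_le_mul_intervalIntegral_sq {f : ℝ → ℝ} (hab : a ≤ b)
    (hf : IntervalIntegrable f volume a b)
    (hf2 : IntervalIntegrable (fun x => f x ^ 2) volume a b) :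
    (∫ x in a..b, f x) ^ 2 ≤ (b - a) * ∫ x in a..b, f x ^ 2 := by
  rcases hab.eq_or_lt with rfl | hab
  · simp
  have hba : 0 < b - a := sub_pos.2 hab
  rw [intervalIntegrable_iff_integrableOn_Ioc_of_le hab.le] at hf hf2
  have jensen := (even_two.convexOn_pow (𝕜 := ℝ)).map_set_average_le
    (continuous_pow 2).continuousOn isClosed_univ (by simp [hab]) (by simp)
    (ae_of_all _ fun _ => mem_univ _) hf hf2
  simp only [setAverage_eq, measureReal_def, Real.volume_Ioc, smul_eq_mul,
    ENNReal.toReal_ofReal hba.le] at jensen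
  rw [intervalIntegral.integral_of_le hab.le, intervalIntegral.integral_of_le hab.le]
  rw [mul_pow, inv_pow, inv_mul_le_iff₀ (by positivity), sq (b - a), mul_assoc (b - a),
    mul_inv_cancel_left₀ hba.ne'] at jensen
  exact jensen

theorem intervalIntegrable_of_hasDerivAt_of_sq (hab : a ≤ b)
    (hderiv : ∀ x ∈ Ioo a b, HasDerivAt u (u' x) x)
    (hint : IntervalIntegrable (fun x => u' x ^ 2) volume a b) :
    IntervalIntegrable u' volume a b := by
  rw [intervalIntegrable_iff_integrableOn_Ioo_of_le hab] at hint ⊢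
  have hmeas : AEStronglyMeasurable u' (volume.restrict (Ioo a b)) :=
    (measurable_deriv u).aestronglyMeasurable.congr <|
      ae_restrict_of_forall_mem measurableSet_Ioo fun x hx => (hderiv x hx).deriv
  exact ((memLp_two_iff_integrable_sq hmeas).2 hint).integrable one_le_two

theorem sq_sub_le_mul_intervalIntegral_deriv_sq (hab : a ≤ b) (hu : ContinuousOn u (Icc a b))
    (hderiv : ∀ x ∈ Ioo a b, HasDerivAt u (u' x) x)
    (hint : IntervalIntegrable (fun x => u' x ^ 2) volume a b) :
    (u b - u a) ^ 2 ≤ (b - a) * ∫ x in a..b, u' x ^ 2 := by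
  have hint' := intervalIntegrable_of_hasDerivAt_of_sq hab hderiv hint
  rw [← intervalIntegral.integral_eq_sub_of_hasDeriv_right_of_le hab hu
    (fun x hx => (hderiv x hx).hasDerivWithinAt) hint']
  exact sq_intervalIntegral_le_mul_intervalIntegral_sq hab hint' hint

theorem cot_mul_sq_le_intervalIntegral_deriv_sq {k x : ℝ} (hk : 0 < k) (hax : a < x)
    (hkx : k * (x - a) ≤ π / 2) (hu : ContinuousOn u (Icc a x))
    (hderiv : ∀ y ∈ Ioo a x, HasDerivAt u (u' y) y)
    (hint : IntervalIntegrable (fun y => u' y ^ 2) volume a x) (ha : u a = 0) :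
    k * cot (k * (x - a)) * u x ^ 2 ≤ ∫ y in a..x, u' y ^ 2 := by
  have hxa : 0 < x - a := sub_pos.2 hax
  calc k * cot (k * (x - a)) * u x ^ 2
      = k * (x - a) * cot (k * (x - a)) * ((u x - u a) ^ 2 / (x - a)) := by
        rw [ha, sub_zero]; field_simp
    _ ≤ 1 * ((u x - u a) ^ 2 / (x - a)) := by
        gcongr
        exact mul_cot_le_one (by positivity) hkx
    _ ≤ ∫ y in a..x, u' y ^ 2 := by
        rw [one_mul, div_le_iff₀' hxa]
        exact sq_sub_le_mul_intervalIntegral_deriv_sq hax.le hu hderiv hint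

theorem continuousOn_cot_mul_sq {k : ℝ} (hab : a < b) (hk : 0 < k) (hkb : k * (b - a) ≤ π / 2)
    (hu : ContinuousOn u (Icc a b)) (hderiv : ∀ x ∈ Ioo a b, HasDerivAt u (u' x) x)
    (hint : IntervalIntegrable (fun x => u' x ^ 2) volume a b) (ha : u a = 0) :
    ContinuousOn (fun x => k * cot (k * (x - a)) * u x ^ 2) (Icc a b) := by
  intro x hx
  obtain rfl | hax := hx.1.eq_or_lt
  · have hprim : Tendsto (fun y => ∫ t in a..y, u' t ^ 2) (𝓝[Ioc a b] a) (𝓝 0) := by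
      have := ((intervalIntegral.continuousOn_primitive_interval' hint left_mem_uIcc) a
        left_mem_uIcc).mono (uIcc_of_le hab.le ▸ Ioc_subset_Icc_self) |>.tendsto
      rwa [intervalIntegral.integral_same] at this
    have hbounds : ∀ y ∈ Ioc a b,
        0 ≤ k * cot (k * (y - a)) * u y ^ 2 ∧
          k * cot (k * (y - a)) * u y ^ 2 ≤ ∫ t in a..y, u' t ^ 2 := by
      intro y hy
      have hky : k * (y - a) ≤ π / 2 := le_trans (by gcongr; exact hy.2) hkb
      have := cot_nonneg (mul_pos hk (sub_pos.2 hy.1)).le hky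
      refine ⟨by positivity, ?_⟩
      exact cot_mul_sq_le_intervalIntegral_deriv_sq hk hy.1 hky
        (hu.mono (Icc_subset_Icc le_rfl hy.2))
        (fun t ht => hderiv t ⟨ht.1, ht.2.trans_le hy.2⟩)
        (hint.mono_set (by
          rw [uIcc_of_le hab.le, uIcc_of_le hy.1.le]; exact Icc_subset_Icc le_rfl hy.2)) ha
    rw [← Ioc_insert_left hab.le, continuousWithinAt_insert_self, ContinuousWithinAt]
    rw [sub_self, mul_zero, ha, zero_pow two_ne_zero, mul_zero]
    exact squeeze_zero' (eventually_nhdsWithin_of_forall fun y hy => (hbounds y hy).1)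
      (eventually_nhdsWithin_of_forall fun y hy => (hbounds y hy).2) hprim
  · have hkx : k * (x - a) ≤ k * (b - a) := by gcongr; exact hx.2
    have hsin : sin (k * (x - a)) ≠ 0 :=
      (sin_pos_of_pos_of_lt_pi (mul_pos hk (sub_pos.2 hax)) (by linarith [pi_pos])).ne'
    have hcot : ContinuousAt (fun y => cot (k * (y - a))) x :=
      (hasDerivAt_cot hsin).continuousAt.comp (f := fun y => k * (y - a)) (by fun_prop)
    exact ((continuousAt_const.mul hcot).continuousWithinAt).mul ((hu x hx).pow 2)

theorem wirtinger_inequality_of_left_eq_zero (hab : a < b) (hu : ContinuousOn u (Icc a b))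
    (hderiv : ∀ x ∈ Ioo a b, HasDerivAt u (u' x) x)
    (hint : IntervalIntegrable (fun x => u' x ^ 2) volume a b) (ha : u a = 0) :
    (π / (2 * (b - a))) ^ 2 * ∫ x in a..b, u x ^ 2 ≤ ∫ x in a..b, u' x ^ 2 := by
  have hba : 0 < b - a := sub_pos.2 hab
  set k := π / (2 * (b - a))
  have hk : 0 < k := by positivity
  have hkb : k * (b - a) = π / 2 := by simp only [k]; field_simp
  have hderivG : ∀ x ∈ Ioo a b, HasDerivAt (fun x => k * cot (k * (x - a)) * u x ^ 2)
      (2 * k * cot (k * (x - a)) * u x * u' x - k ^ 2 * (1 + cot (k * (x - a)) ^ 2) * u x ^ 2)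
      x := by
    intro x hx
    have hkx : k * (x - a) < k * (b - a) := by gcongr; exact hx.2
    have hsin : sin (k * (x - a)) ≠ 0 :=
      (sin_pos_of_pos_of_lt_pi (mul_pos hk (sub_pos.2 hx.1)) (by linarith [pi_pos])).ne'
    have hcot := (hasDerivAt_cot hsin).comp x (((hasDerivAt_id x).sub_const a).const_mul k)
    exact ((hcot.const_mul k).fun_mul ((hderiv x hx).fun_pow 2)).congr_deriv
      (by simp only [Function.comp_apply, id, Nat.cast_ofNat]; ring)
  have hderivG_le : ∀ x ∈ Ioo a b,
      2 * k * cot (k * (x - a)) * u x * u' x - k ^ 2 * (1 + cot (k * (x - a)) ^ 2) * u x ^ 2 ≤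
        u' x ^ 2 - k ^ 2 * u x ^ 2 := fun x _ => by
    nlinarith [sq_nonneg (u' x - k * cot (k * (x - a)) * u x)]
  have hu2 : IntervalIntegrable (fun x => u x ^ 2) volume a b :=
    (hu.pow 2).intervalIntegrable_of_Icc hab.le
  have hftc := intervalIntegral.sub_le_integral_of_hasDeriv_right_of_le hab.le
    (continuousOn_cot_mul_sq hab hk hkb.le hu hderiv hint ha)
    (fun x hx => (hderivG x hx).hasDerivWithinAt)
    ((intervalIntegrable_iff_integrableOn_Icc_of_le hab.le).1 (hint.sub (hu2.const_mul _)))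
    hderivG_le
  rw [intervalIntegral.integral_sub hint (hu2.const_mul _), intervalIntegral.integral_const_mul,
    hkb, sub_self, ha] at hftc
  simpa [cot_eq_cos_div_sin] using hftc

theorem wirtinger_inequality_of_right_eq_zero (hab : a < b) (hu : ContinuousOn u (Icc a b))
    (hderiv : ∀ x ∈ Ioo a b, HasDerivAt u (u' x) x)
    (hint : IntervalIntegrable (fun x => u' x ^ 2) volume a b) (hb : u b = 0) :
    (π / (2 * (b - a))) ^ 2 * ∫ x in a..b, u x ^ 2 ≤ ∫ x in a..b, u' x ^ 2 := by
  have hreflect : MapsTo (fun x => a + b - x) (Icc a b) (Icc a b) := fun x hx =>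
    ⟨by linarith [hx.2], by linarith [hx.1]⟩
  have hint_reflect : IntervalIntegrable (fun x => (-u' (a + b - x)) ^ 2) volume a b := by
    simpa using (hint.comp_sub_left (a + b)).symm
  have h := wirtinger_inequality_of_left_eq_zero hab (u := fun x => u (a + b - x))
    (hu.comp (by fun_prop) hreflect)
    (fun x hx => (hderiv (a + b - x) ⟨by linarith [hx.2], by linarith [hx.1]⟩).comp_const_sub
      (a + b) x)
    hint_reflect (by simpa using hb)
  simpa [intervalIntegral.integral_comp_sub_left fun x => u x ^ 2,
    intervalIntegral.integral_comp_sub_left fun x => u' x ^ 2] using h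

theorem steklov_inequality_intervalIntegral (hab : a < b) (hu : ContinuousOn u (Icc a b))
    (hderiv : ∀ x ∈ Ioo a b, HasDerivAt u (u' x) x)
    (hint : IntervalIntegrable (fun x => u' x ^ 2) volume a b) (ha : u a = 0) (hb : u b = 0) :
    (π / (b - a)) ^ 2 * ∫ x in a..b, u x ^ 2 ≤ ∫ x in a..b, u' x ^ 2 := by
  set m := (a + b) / 2 with hm
  have ham : a < m := by linarith
  have hmb : m < b := by linarith
  have hu2 : IntervalIntegrable (fun x => u x ^ 2) volume a b :=
    (hu.pow 2).intervalIntegrable_of_Icc hab.le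
  have hm_mem : m ∈ uIcc a b := mem_uIcc_of_le ham.le hmb.le
  have hsub_left : uIcc a m ⊆ uIcc a b := uIcc_subset_uIcc_left hm_mem
  have hsub_right : uIcc m b ⊆ uIcc a b := uIcc_subset_uIcc_right hm_mem
  have hleft := wirtinger_inequality_of_left_eq_zero ham (hu.mono (Icc_subset_Icc le_rfl hmb.le))
    (fun x hx => hderiv x ⟨hx.1, hx.2.trans hmb⟩) (hint.mono_set hsub_left) ha
  have hright := wirtinger_inequality_of_right_eq_zero hmb (hu.mono (Icc_subset_Icc ham.le le_rfl))
    (fun x hx => hderiv x ⟨ham.trans hx.1, hx.2⟩) (hint.mono_set hsub_right) hb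
  rw [show 2 * (m - a) = b - a by ring] at hleft
  rw [show 2 * (b - m) = b - a by ring] at hright
  rw [← intervalIntegral.integral_add_adjacent_intervals (hu2.mono_set hsub_left)
      (hu2.mono_set hsub_right),
    ← intervalIntegral.integral_add_adjacent_intervals (hint.mono_set hsub_left)
      (hint.mono_set hsub_right)]
  linarith

theorem steklov_inequality_general (L : ℝ) (hL : 0 < L) (v v' : ℝ → ℝ)
    (hv : ContinuousOn v (Icc 0 L))
    (hderiv : ∀ x ∈ Ioo 0 L, HasDerivAt v (v' x) x)
    (hint : IntegrableOn (fun x => v' x ^ 2) (Ioo 0 L))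
    (h0 : v 0 = 0) (hLv : v L = 0) :
    (Real.pi ^ 2 / L ^ 2) * ∫ x in Ioo 0 L, v x ^ 2 ≤ ∫ x in Ioo 0 L, v' x ^ 2 := by
  have h := steklov_inequality_intervalIntegral hL hv hderiv
    ((intervalIntegrable_iff_integrableOn_Ioo_of_le hL.le).2 hint) h0 hLv
  rwa [intervalIntegral.integral_of_le hL.le, intervalIntegral.integral_of_le hL.le,
    integral_Ioc_eq_integral_Ioo, integral_Ioc_eq_integral_Ioo, sub_zero, div_pow] at h

/-- **Steklov's inequality.** If `v` is continuous on `[0, L]`, continuously differentiable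
on `(0, L)` with square-integrable derivative, and `v 0 = v L = 0`, then
`(π² / L²) ∫₀ᴸ v² ≤ ∫₀ᴸ (v')²`. -/
theorem steklov_inequality (L : ℝ) (hL : 0 < L) (v v' : ℝ → ℝ)
    (hv : ContinuousOn v (Icc 0 L))
    (hderiv : ∀ x ∈ Ioo 0 L, HasDerivAt v (v' x) x)
    (hv' : ContinuousOn v' (Ioo 0 L))
    (hint : IntegrableOn (fun x => v' x ^ 2) (Ioo 0 L))
    (h0 : v 0 = 0) (hLv : v L = 0) :
    (Real.pi ^ 2 / L ^ 2) * ∫ x in Ioo 0 L, v x ^ 2 ≤ ∫ x in Ioo 0 L, v' x ^ 2 :=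
  steklov_inequality_general L hL v v' hv hderiv hint h0 hLv
end

section
/- Second-order Poincaré-type inequality: let L₁, L₂, L₃, L₄ be positive real numbers, D = Π_{i=1}^4 (0,L_i) ⊂ ℝ⁴, Ω ⊆ D open, and χ = Σ_{i=1}^4 π²/L_i². Then for every smooth function u : ℝ⁴ → ℝ with compact support contained in Ω, one has χ ‖u‖_{L²(Ω)} ≤ ‖Δu‖_{L²(Ω)}, where Δu = Σ_{i=1}^4 ∂²u/∂x_i² is the Laplacian. -/
open MeasureTheory Set




lemma deriv_eq_zero_of_nmem_tsupport {g : ℝ → ℝ} {x : ℝ} (h : x ∉ tsupport g) :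
    deriv g x = 0 := by
  have hopen : IsOpen (tsupport g)ᶜ := isClosed_tsupport g |>.isOpen_compl
  have hev : g =ᶠ[nhds x] (fun _ => (0:ℝ)) := by
    filter_upwards [hopen.mem_nhds h] with y hy
    exact image_eq_zero_of_notMem_tsupport hy
  rw [hev.deriv_eq, deriv_const]

lemma exists_good_interval {g : ℝ → ℝ} (hK : IsCompact (tsupport g)) {c d : ℝ}
    (h : tsupport g ⊆ Ioo c d) (hne : (tsupport g).Nonempty) :
    ∃ a b, a < b ∧ Icc a b ⊆ Ioo c d ∧ tsupport g ⊆ Ioo a b := by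
  obtain ⟨δ, hδ, hth⟩ := hK.exists_thickening_subset_open isOpen_Ioo h
  set K := tsupport g
  have hInf := hK.sInf_mem hne
  have hSup := hK.sSup_mem hne
  have hle : sInf K ≤ sSup K := csInf_le_csSup hne hK.bddBelow hK.bddAbove
  refine ⟨sInf K - δ/2, sSup K + δ/2, by linarith, ?_, ?_⟩
  · intro x hx
    rcases lt_or_ge x (sInf K) with h1 | h1
    · refine hth (Metric.mem_thickening_iff.2 ⟨sInf K, hInf, ?_⟩)
      rw [Real.dist_eq, abs_of_nonpos (by linarith)]
      have := hx.1; simp only [mem_Icc] at hx; linarith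
    rcases le_or_gt x (sSup K) with h2 | h2
    · have l1 := h hInf; have l2 := h hSup
      exact ⟨lt_of_lt_of_le l1.1 h1, lt_of_le_of_lt h2 l2.2⟩
    · refine hth (Metric.mem_thickening_iff.2 ⟨sSup K, hSup, ?_⟩)
      rw [Real.dist_eq, abs_of_nonneg (by linarith)]
      simp only [mem_Icc] at hx; linarith
  · intro x hx
    have := le_csSup hK.bddAbove hx
    have := csInf_le hK.bddBelow hx
    constructor <;> [linarith; linarith]

lemma integral_deriv_zero {g : ℝ → ℝ} (hg : ContDiff ℝ (⊤ : ℕ∞) g) (hgc : HasCompactSupport g) :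
    ∫ t : ℝ, deriv g t = 0 := by
  rcases (tsupport g).eq_empty_or_nonempty with he | hne
  · have : ∀ t, deriv g t = 0 := fun t =>
      deriv_eq_zero_of_nmem_tsupport (by simp [he])
    simp [this]
  · have hsub : tsupport g ⊆ Ioo (sInf (tsupport g) - 1) (sSup (tsupport g) + 1) := by
      intro x hx
      have := le_csSup hgc.bddAbove hx
      have := csInf_le hgc.bddBelow hx
      constructor <;> linarith
    set a := sInf (tsupport g) - 1
    set b := sSup (tsupport g) + 1
    have hab : a ≤ b := by
      have := hgc.bddAbove
      have h1 := csInf_le hgc.bddBelow hne.some_mem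
      have h2 := le_csSup hgc.bddAbove hne.some_mem
      simp only [a, b]; linarith
    have hcont : Continuous (deriv g) := hg.continuous_deriv (by simp)
    have h0 : ∀ x ∉ Ioc a b, deriv g x = 0 := by
      intro x hx
      refine deriv_eq_zero_of_nmem_tsupport fun hmem => hx ?_
      exact Ioo_subset_Ioc_self (hsub hmem)
    rw [← setIntegral_eq_integral_of_forall_compl_eq_zero h0,
      ← intervalIntegral.integral_of_le hab,
      intervalIntegral.integral_deriv_eq_sub
        (fun x _ => (hg.differentiable (by simp)).differentiableAt)
        (hcont.intervalIntegrable a b)]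
    have ha : g a = 0 := image_eq_zero_of_notMem_tsupport (fun hmem => by
      have := (hsub hmem).1; simp only [a] at this; linarith)
    have hb : g b = 0 := image_eq_zero_of_notMem_tsupport (fun hmem => by
      have := (hsub hmem).2; simp only [b] at this; linarith)
    rw [ha, hb, sub_zero]

lemma deriv_eq_zero_of_nmem_tsupport' {g : ℝ → ℝ} {x : ℝ} (h : x ∉ tsupport g) :
    deriv g x = 0 := by
  have hopen : IsOpen (tsupport g)ᶜ := isClosed_tsupport g |>.isOpen_compl
  have hev : g =ᶠ[nhds x] (fun _ => (0:ℝ)) := by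
    filter_upwards [hopen.mem_nhds h] with y hy
    exact image_eq_zero_of_notMem_tsupport hy
  rw [hev.deriv_eq, deriv_const]

lemma exists_good_interval' {g : ℝ → ℝ} (hK : IsCompact (tsupport g)) {c d : ℝ}
    (h : tsupport g ⊆ Ioo c d) (hne : (tsupport g).Nonempty) :
    ∃ a b, a < b ∧ Icc a b ⊆ Ioo c d ∧ tsupport g ⊆ Ioo a b := by
  obtain ⟨δ, hδ, hth⟩ := hK.exists_thickening_subset_open isOpen_Ioo h
  set K := tsupport g
  have hInf := hK.sInf_mem hne
  have hSup := hK.sSup_mem hne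
  have hle : sInf K ≤ sSup K := csInf_le_csSup hne hK.bddBelow hK.bddAbove
  refine ⟨sInf K - δ/2, sSup K + δ/2, by linarith, ?_, ?_⟩
  · intro x hx
    rcases lt_or_ge x (sInf K) with h1 | h1
    · refine hth (Metric.mem_thickening_iff.2 ⟨sInf K, hInf, ?_⟩)
      rw [Real.dist_eq, abs_of_nonpos (by linarith)]
      simp only [mem_Icc] at hx; linarith
    rcases le_or_gt x (sSup K) with h2 | h2
    · have l1 := h hInf; have l2 := h hSup
      exact ⟨lt_of_lt_of_le l1.1 h1, lt_of_le_of_lt h2 l2.2⟩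
    · refine hth (Metric.mem_thickening_iff.2 ⟨sSup K, hSup, ?_⟩)
      rw [Real.dist_eq, abs_of_nonneg (by linarith)]
      simp only [mem_Icc] at hx; linarith
  · intro x hx
    have := le_csSup hK.bddAbove hx
    have := csInf_le hK.bddBelow hx
    constructor <;> linarith

lemma wirtinger_1d {L : ℝ} (hL : 0 < L) {g : ℝ → ℝ} (hg : ContDiff ℝ (⊤ : ℕ∞) g)
    (hgc : HasCompactSupport g) (hsupp : tsupport g ⊆ Ioo 0 L) :
    (Real.pi / L)^2 * ∫ t : ℝ, g t ^ 2 ≤ ∫ t : ℝ, deriv g t ^ 2 := by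
  have hgcont : Continuous g := hg.continuous
  have hg'cont : Continuous (deriv g) := hg.continuous_deriv (by simp)
  have hgdiff : Differentiable ℝ g := hg.differentiable (by simp)
  have hint2 : Integrable (fun t => deriv g t ^ 2) :=
    (hg'cont.pow 2).integrable_of_hasCompactSupport
      (by have h2 := hgc.deriv.comp_left (g := fun s : ℝ => s^2) (by simp); exact h2)
  have hrhs_nonneg : (0:ℝ) ≤ ∫ t : ℝ, deriv g t ^ 2 :=
    integral_nonneg fun t => sq_nonneg _
  rcases (tsupport g).eq_empty_or_nonempty with he | hne
  · have hz : ∀ t, g t = 0 := fun t => image_eq_zero_of_notMem_tsupport (by simp [he])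
    simp [hz]; positivity
  obtain ⟨a, b, hab, hIcc, hsupp2⟩ := exists_good_interval' hgc hsupp hne
  set c := Real.pi / L with hc
  have hcpos : 0 < c := div_pos Real.pi_pos hL
  -- sin (c x) positive on Icc a b
  have hsin : ∀ x ∈ Icc a b, 0 < Real.sin (c * x) := by
    intro x hx
    obtain ⟨hx0, hxL⟩ := hIcc hx
    apply Real.sin_pos_of_pos_of_lt_pi (by positivity)
    calc c * x < c * L := by apply mul_lt_mul_of_pos_left hxL hcpos
    _ = Real.pi := by rw [hc]; field_simp
  have ha0 : g a = 0 := image_eq_zero_of_notMem_tsupport fun hmem => by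
    have := (hsupp2 hmem).1; linarith
  have hb0 : g b = 0 := image_eq_zero_of_notMem_tsupport fun hmem => by
    have := (hsupp2 hmem).2; linarith
  set P : ℝ → ℝ := fun x => g x ^ 2 * Real.cos (c*x) / Real.sin (c*x) with hP
  set P' : ℝ → ℝ := fun x =>
    (2 * g x * deriv g x * Real.cos (c*x) * Real.sin (c*x) - c * g x ^ 2) / Real.sin (c*x) ^ 2
    with hP'
  have hderivP : ∀ x ∈ uIcc a b, HasDerivAt P (P' x) x := by
    intro x hx
    rw [uIcc_of_le hab.le] at hx
    have hs := hsin x hx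
    have hdlin : HasDerivAt (fun y : ℝ => c * y) c x := by
      simpa using (hasDerivAt_id x).const_mul c
    have hdsin : HasDerivAt (fun y : ℝ => Real.sin (c*y)) (Real.cos (c*x) * c) x :=
      (Real.hasDerivAt_sin (c*x)).comp x hdlin
    have hdcos : HasDerivAt (fun y : ℝ => Real.cos (c*y)) (-Real.sin (c*x) * c) x :=
      (Real.hasDerivAt_cos (c*x)).comp x hdlin
    have hdg : HasDerivAt g (deriv g x) x := (hgdiff x).hasDerivAt
    have hdN : HasDerivAt (fun y => g y ^ 2 * Real.cos (c*y))
        ((2:ℕ) * g x ^ 1 * deriv g x * Real.cos (c*x) + g x ^ 2 * (-Real.sin (c*x) * c)) x :=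
      (hdg.pow 2).mul hdcos
    have := hdN.div hdsin hs.ne'
    refine this.congr_deriv ?_
    have hpyth := Real.sin_sq_add_cos_sq (c*x)
    simp only [hP']
    rw [div_eq_div_iff (pow_ne_zero _ hs.ne') (pow_ne_zero _ hs.ne')]
    push_cast
    linear_combination (-(c * g x ^ 2 * Real.sin (c*x) ^ 2)) * hpyth
  -- pointwise identity
  have hkey : ∀ x ∈ Icc a b, deriv g x ^ 2 =
      (deriv g x - c * g x * Real.cos (c*x) / Real.sin (c*x))^2 + c * P' x + c^2 * g x ^2 := by
    intro x hx
    have hs := (hsin x hx).ne'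
    have hpyth := Real.sin_sq_add_cos_sq (c*x)
    simp only [hP']
    clear_value c
    field_simp
    linear_combination (-(c^2 * g x ^ 2)) * hpyth
  -- interval integrabilities
  have hcontQ : ContinuousOn (fun x => (deriv g x - c * g x * Real.cos (c*x) / Real.sin (c*x))^2) (uIcc a b) := by
    rw [uIcc_of_le hab.le]
    apply ContinuousOn.pow
    exact hg'cont.continuousOn.sub (((continuous_const.mul hgcont).mul
      (Real.continuous_cos.comp (continuous_const.mul continuous_id))).continuousOn.div
      ((Real.continuous_sin.comp (continuous_const.mul continuous_id)).continuousOn)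
      (fun x hx => (hsin x hx).ne'))
  have hcontP' : ContinuousOn P' (uIcc a b) := by
    rw [uIcc_of_le hab.le]
    apply ContinuousOn.div
    · fun_prop
    · fun_prop
    · exact fun x hx => pow_ne_zero _ (hsin x hx).ne'
  have hQi := hcontQ.intervalIntegrable (μ := volume)
  have hP'i := hcontP'.intervalIntegrable (μ := volume)
  have hg2i : IntervalIntegrable (fun x => g x ^ 2) volume a b :=
    (hgcont.pow 2).intervalIntegrable a b
  have hg'2i : IntervalIntegrable (fun x => deriv g x ^ 2) volume a b :=
    (hg'cont.pow 2).intervalIntegrable a b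
  -- FTC: integral of P' is zero
  have e2 : ∫ x in a..b, P' x = 0 := by
    rw [intervalIntegral.integral_eq_sub_of_hasDerivAt hderivP hP'i]
    simp [hP, ha0, hb0]
  -- split the integral
  have e1 : ∫ x in a..b, deriv g x ^ 2 =
      (∫ x in a..b, (deriv g x - c * g x * Real.cos (c*x) / Real.sin (c*x))^2)
      + c * (∫ x in a..b, P' x) + c^2 * ∫ x in a..b, g x ^ 2 := by
    rw [intervalIntegral.integral_congr (g := fun x =>
        (deriv g x - c * g x * Real.cos (c*x) / Real.sin (c*x))^2 + c * P' x + c^2 * g x ^2)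
        (fun x hx => hkey x (by rwa [uIcc_of_le hab.le] at hx)),
      intervalIntegral.integral_add (hQi.add (hP'i.const_mul c)) (hg2i.const_mul (c^2)),
      intervalIntegral.integral_add hQi (hP'i.const_mul c),
      intervalIntegral.integral_const_mul, intervalIntegral.integral_const_mul]
  have hQnn : 0 ≤ ∫ x in a..b, (deriv g x - c * g x * Real.cos (c*x) / Real.sin (c*x))^2 :=
    intervalIntegral.integral_nonneg hab.le (fun u hu => sq_nonneg _)
  have E1 : ∫ x in a..b, g x ^ 2 = ∫ t : ℝ, g t ^ 2 := by
    rw [intervalIntegral.integral_of_le hab.le]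
    refine setIntegral_eq_integral_of_forall_compl_eq_zero fun x hx => ?_
    have : g x = 0 := image_eq_zero_of_notMem_tsupport
      (fun hmem => hx (Ioo_subset_Ioc_self (hsupp2 hmem)))
    simp [this]
  have E2 : ∫ x in a..b, deriv g x ^ 2 ≤ ∫ t : ℝ, deriv g t ^ 2 := by
    rw [intervalIntegral.integral_of_le hab.le]
    exact setIntegral_le_integral hint2 (Filter.Eventually.of_forall fun t => sq_nonneg _)
  rw [e2, E1, mul_zero, add_zero] at e1
  linarith

lemma insertNth_line (i : Fin 4) (y : Fin 3 → ℝ) (s : ℝ) :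
    i.insertNth s y = i.insertNth 0 y + s • (Pi.single i 1 : Fin 4 → ℝ) := by
  funext j
  refine Fin.succAboveCases i ?_ ?_ j
  · simp
  · intro j'
    simp [Fin.insertNth_apply_succAbove, Pi.single_eq_of_ne (Fin.succAbove_ne i j')]

lemma contDiff_insertNth (i : Fin 4) (y : Fin 3 → ℝ) :
    ContDiff ℝ (⊤ : ℕ∞) (fun s : ℝ => (i.insertNth s y : Fin 4 → ℝ)) := by
  have : (fun s : ℝ => i.insertNth s y)
      = fun s : ℝ => i.insertNth 0 y + s • (Pi.single i 1 : Fin 4 → ℝ) :=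
    funext (insertNth_line i y)
  rw [this]
  exact contDiff_const.add (contDiff_id.smul contDiff_const)

lemma hasDerivAt_slice {u : (Fin 4 → ℝ) → ℝ} (hu : Differentiable ℝ u)
    (i : Fin 4) (y : Fin 3 → ℝ) (t : ℝ) :
    HasDerivAt (fun s : ℝ => u (i.insertNth s y))
      (fderiv ℝ u (i.insertNth t y) (Pi.single i 1)) t := by
  have h1 : HasDerivAt (fun s : ℝ => i.insertNth 0 y + s • (Pi.single i 1 : Fin 4 → ℝ))
      (Pi.single i 1 : Fin 4 → ℝ) t := by
    simpa using ((hasDerivAt_id t).smul_const (Pi.single i 1 : Fin 4 → ℝ)).const_add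
      (i.insertNth 0 y)
  have h2 := (hu _).hasFDerivAt.comp_hasDerivAt t h1
  have he : (fun s : ℝ => i.insertNth s y)
      = fun s : ℝ => i.insertNth 0 y + s • (Pi.single i 1 : Fin 4 → ℝ) :=
    funext (insertNth_line i y)
  rw [← insertNth_line i y t, ← he] at h2
  exact h2

lemma slice_tsupport {u : (Fin 4 → ℝ) → ℝ} (i : Fin 4) (y : Fin 3 → ℝ) :
    tsupport (fun s : ℝ => u (i.insertNth s y)) ⊆ {t : ℝ | i.insertNth t y ∈ tsupport u} := by
  apply closure_minimal
  · intro t ht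
    exact subset_tsupport u ht
  · exact (isClosed_tsupport u).preimage (contDiff_insertNth i y).continuous


lemma slice_repr (i : Fin 4) (f : (Fin 4 → ℝ) → ℝ) (hf : Continuous f)
    (hfc : HasCompactSupport f) :
    (∫ x, f x) = (∫ y : Fin 3 → ℝ, ∫ t : ℝ, f (i.insertNth t y)) ∧
      Integrable (fun y : Fin 3 → ℝ => ∫ t : ℝ, f (i.insertNth t y)) := by
  have hint : Integrable f := hf.integrable_of_hasCompactSupport hfc
  have hmp := (volume_preserving_piFinSuccAbove (fun _ : Fin 4 => ℝ) i).symm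
  have hemb := (MeasurableEquiv.piFinSuccAbove (fun _ : Fin 4 => ℝ) i).symm.measurableEmbedding
  have h1 : ∫ p : ℝ × (Fin 3 → ℝ), f ((MeasurableEquiv.piFinSuccAbove (fun _ : Fin 4 => ℝ) i).symm p) = ∫ x, f x :=
    hmp.integral_comp hemb f
  have hint2 : Integrable (fun p : ℝ × (Fin 3 → ℝ) => f ((MeasurableEquiv.piFinSuccAbove (fun _ : Fin 4 => ℝ) i).symm p)) :=
    (hmp.integrable_comp_emb hemb).2 hint
  have hkey : ∀ p : ℝ × (Fin 3 → ℝ), (MeasurableEquiv.piFinSuccAbove (fun _ : Fin 4 => ℝ) i).symm p = i.insertNth p.1 p.2 := by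
    intro p
    rw [MeasurableEquiv.piFinSuccAbove_symm_apply]
    simp [Fin.insertNthEquiv]
  simp only [hkey] at h1 hint2
  rw [Measure.volume_eq_prod] at h1 hint2
  constructor
  · rw [← h1, integral_prod_symm _ hint2]
  · exact hint2.integral_prod_right

lemma cs_integral {α : Type*} [MeasurableSpace α] {μ : Measure α} {f h : α → ℝ}
    (hf2 : Integrable (fun x => f x ^ 2) μ) (hh2 : Integrable (fun x => h x ^ 2) μ)
    (hfh : Integrable (fun x => f x * h x) μ) :
    ∫ x, f x * h x ∂μ ≤ Real.sqrt (∫ x, f x ^ 2 ∂μ) * Real.sqrt (∫ x, h x ^ 2 ∂μ) := by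
  set A := ∫ x, f x ^ 2 ∂μ with hA
  set B := ∫ x, h x ^ 2 ∂μ with hB
  set C := ∫ x, f x * h x ∂μ with hC
  have hAnn : 0 ≤ A := integral_nonneg fun x => sq_nonneg _
  have hBnn : 0 ≤ B := integral_nonneg fun x => sq_nonneg _
  have hq : ∀ t : ℝ, 0 ≤ A * t^2 + 2 * t * C + B := by
    intro t
    have h0 : (0:ℝ) ≤ ∫ x, (t * f x + h x)^2 ∂μ := integral_nonneg fun x => sq_nonneg _
    have hrw : ∀ x, (t * f x + h x)^2
        = t^2 * (f x ^2) + (2*t) * (f x * h x) + h x ^2 := fun x => by ring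
    rw [integral_congr_ae (Filter.Eventually.of_forall hrw)] at h0
    have i1 : Integrable (fun x => t^2 * (f x^2) + (2*t) * (f x * h x)) μ :=
      (hf2.const_mul _).add (hfh.const_mul _)
    rw [integral_add i1 hh2, integral_add (hf2.const_mul _) (hfh.const_mul _),
      MeasureTheory.integral_const_mul, MeasureTheory.integral_const_mul] at h0
    calc (0:ℝ) ≤ t ^ 2 * A + 2 * t * C + B := by rw [hA, hB, hC]; linarith
    _ = A * t^2 + 2*t*C + B := by ring
  have hC2 : C^2 ≤ A * B := by
    rcases eq_or_lt_of_le hAnn with hA0 | hApos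
    · have hCz : C = 0 := by
        by_contra hCne
        have key := hq (-(B + 1) / (2 * C))
        rw [← hA0] at key
        have ht : 2 * (-(B+1)/(2*C)) * C = -(B+1) := by field_simp
        rw [ht] at key
        nlinarith [key]
      rw [hCz]; nlinarith
    · have key := hq (-C / A)
      have hAne : A ≠ 0 := ne_of_gt hApos
      have ht : A * (-C/A)^2 + 2*(-C/A)*C + B = B - C^2/A := by field_simp; ring
      rw [ht] at key
      have hdiv : C^2 / A ≤ B := by linarith
      calc C^2 = (C^2/A)*A := by field_simp
      _ ≤ B * A := mul_le_mul_of_nonneg_right hdiv hApos.le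
      _ = A * B := mul_comm _ _
  calc C ≤ |C| := le_abs_self C
  _ = Real.sqrt (C^2) := (Real.sqrt_sq_eq_abs C).symm
  _ ≤ Real.sqrt (A * B) := Real.sqrt_le_sqrt hC2
  _ = Real.sqrt A * Real.sqrt B := Real.sqrt_mul hAnn B



lemma hcs_sq {X : Type*} [TopologicalSpace X] {f : X → ℝ} (h : HasCompactSupport f) :
    HasCompactSupport (fun x => f x ^ 2) :=
  h.comp_left (g := (· ^ 2)) (by simp)

lemma hcs_neg {X : Type*} [TopologicalSpace X] {f : X → ℝ} (h : HasCompactSupport f) :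
    HasCompactSupport (fun x => -(f x)) :=
  h.comp_left (g := Neg.neg) neg_zero



set_option maxHeartbeats 2000000 in
lemma main_aux (L : Fin 4 → ℝ) (hL : ∀ i, 0 < L i)
    (Ω : Set (Fin 4 → ℝ))
    (hΩD : Ω ⊆ {x : Fin 4 → ℝ | ∀ i, x i ∈ Ioo 0 (L i)})
    (u : (Fin 4 → ℝ) → ℝ) (hu : ContDiff ℝ (⊤ : ℕ∞) u)
    (hc : HasCompactSupport u) (hsupp : tsupport u ⊆ Ω)
    (v w : Fin 4 → (Fin 4 → ℝ) → ℝ)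
    (hv : ∀ i, v i = fun x => fderiv ℝ u x (Pi.single i 1))
    (hw : ∀ i, w i = fun x => fderiv ℝ (v i) x (Pi.single i 1)) :
    (∑ i : Fin 4, Real.pi ^ 2 / (L i) ^ 2) * Real.sqrt (∫ x in Ω, (u x) ^ 2) ≤
      Real.sqrt (∫ x in Ω, (∑ i : Fin 4, w i x) ^ 2) := by
  have hudiff : Differentiable ℝ u := hu.differentiable (by simp)
  have hucont : Continuous u := hu.continuous
  -- smoothness and support of v i
  have hvs : ∀ i, ContDiff ℝ (⊤ : ℕ∞) (v i) := fun i => by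
    rw [hv i]; exact (hu.fderiv_right (by simp)).clm_apply contDiff_const
  have hvts : ∀ i, tsupport (v i) ⊆ tsupport u := by
    intro i
    apply closure_minimal _ (isClosed_tsupport u)
    intro x hx
    apply support_fderiv_subset ℝ (f := u)
    intro hz
    apply hx
    rw [hv]; simp [hz]
  have hvcs : ∀ i, HasCompactSupport (v i) := fun i =>
    IsCompact.of_isClosed_subset hc (isClosed_tsupport _) (hvts i)
  have hvdiff : ∀ i, Differentiable ℝ (v i) := fun i => (hvs i).differentiable (by simp)
  have hws : ∀ i, ContDiff ℝ (⊤ : ℕ∞) (w i) := fun i => by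
    rw [hw i]; exact ((hvs i).fderiv_right (by simp)).clm_apply contDiff_const
  have hwcont : ∀ i, Continuous (w i) := fun i => (hws i).continuous
  have hwts' : ∀ i, tsupport (w i) ⊆ tsupport (v i) := by
    intro i
    apply closure_minimal _ (isClosed_tsupport (v i))
    intro x hx
    apply support_fderiv_subset ℝ (f := v i)
    intro hz
    apply hx
    rw [hw]; simp [hz]
  have hwts : ∀ i, tsupport (w i) ⊆ tsupport u := fun i => (hwts' i).trans (hvts i)
  have hwcs : ∀ i, HasCompactSupport (w i) := fun i =>
    IsCompact.of_isClosed_subset hc (isClosed_tsupport _) (hwts i)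
  -- Laplacian
  set Δ : (Fin 4 → ℝ) → ℝ := fun x => ∑ i, w i x with hΔ
  have hΔcont : Continuous Δ := continuous_finset_sum _ fun i _ => hwcont i
  have hΔzero : ∀ x, x ∉ tsupport u → Δ x = 0 := fun x hx => by
    rw [hΔ]
    exact Finset.sum_eq_zero fun i _ => image_eq_zero_of_notMem_tsupport fun h => hx (hwts i h)
  have hΔcs : HasCompactSupport Δ :=
    IsCompact.of_isClosed_subset hc (isClosed_tsupport _)
      (closure_minimal (fun x hx => by
        by_contra h; exact hx (hΔzero x h)) (isClosed_tsupport u))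
  -- integrabilities
  have hIu2 : Integrable (fun x => u x ^ 2) := (hucont.pow 2).integrable_of_hasCompactSupport (hcs_sq hc)
  have hIv2 : ∀ i, Integrable (fun x => v i x ^ 2) := fun i =>
    (((hvs i).continuous).pow 2).integrable_of_hasCompactSupport (hcs_sq (hvcs i))
  have hIuw : ∀ i, Integrable (fun x => u x * w i x) := fun i =>
    (hucont.mul (hwcont i)).integrable_of_hasCompactSupport (hc.mul_right)
  have hIΔ2 : Integrable (fun x => Δ x ^ 2) := (hΔcont.pow 2).integrable_of_hasCompactSupport (hcs_sq hΔcs)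
  have hIuΔ : Integrable (fun x => u x * Δ x) :=
    (hucont.mul hΔcont).integrable_of_hasCompactSupport (hc.mul_right)
  -- remove Ω
  have hS1 : ∫ x in Ω, u x ^ 2 = ∫ x, u x ^ 2 :=
    setIntegral_eq_integral_of_forall_compl_eq_zero fun x hx => by
      rw [image_eq_zero_of_notMem_tsupport fun h => hx (hsupp h)]; ring
  have hS2 : ∫ x in Ω, (∑ i, w i x) ^ 2 = ∫ x, Δ x ^ 2 :=
    setIntegral_eq_integral_of_forall_compl_eq_zero fun x hx => by
      rw [show (∑ i, w i x) = Δ x from rfl, hΔzero x fun h => hx (hsupp h)]; ring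
  rw [hS1, hS2]
  -- the slice function facts
  have hslice : ∀ (i : Fin 4) (y : Fin 3 → ℝ),
      ContDiff ℝ (⊤ : ℕ∞) (fun t : ℝ => u (i.insertNth t y)) ∧
      tsupport (fun t : ℝ => u (i.insertNth t y)) ⊆ Ioo 0 (L i) ∧
      HasCompactSupport (fun t : ℝ => u (i.insertNth t y)) := by
    intro i y
    have h1 : ContDiff ℝ (⊤ : ℕ∞) (fun t : ℝ => u (i.insertNth t y)) :=
      hu.comp (contDiff_insertNth i y)
    have h2 : tsupport (fun t : ℝ => u (i.insertNth t y)) ⊆ Ioo 0 (L i) := by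
      intro t ht
      have h3 := slice_tsupport i y ht
      have h4 := hΩD (hsupp h3) i
      rwa [Fin.insertNth_apply_same] at h4
    exact ⟨h1, h2, IsCompact.of_isClosed_subset isCompact_Icc (isClosed_tsupport _)
      (h2.trans Ioo_subset_Icc_self)⟩
  have hderiv_slice : ∀ (i : Fin 4) (y : Fin 3 → ℝ) (t : ℝ),
      deriv (fun t : ℝ => u (i.insertNth t y)) t = v i (i.insertNth t y) := fun i y t => by
    rw [(hasDerivAt_slice hudiff i y t).deriv, hv]
  have hderiv2_slice : ∀ (i : Fin 4) (y : Fin 3 → ℝ) (t : ℝ),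
      deriv (fun t : ℝ => v i (i.insertNth t y)) t = w i (i.insertNth t y) := fun i y t => by
    rw [(hasDerivAt_slice (hvdiff i) i y t).deriv, hw]
  -- Poincaré per coordinate
  have hP : ∀ i : Fin 4, (Real.pi / L i)^2 * ∫ x, u x ^ 2 ≤ ∫ x, v i x ^ 2 := by
    intro i
    obtain ⟨e1, int1⟩ := slice_repr i (fun x => u x ^ 2) (hucont.pow 2) (hcs_sq hc)
    obtain ⟨e2, int2⟩ := slice_repr i (fun x => v i x ^ 2) (((hvs i).continuous).pow 2) (hcs_sq (hvcs i))
    rw [e1, e2, ← integral_const_mul]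
    refine integral_mono (int1.const_mul _) int2 fun y => ?_
    obtain ⟨hg, hgts, hgcs⟩ := hslice i y
    have key := wirtinger_1d (hL i) hg hgcs hgts
    simp only [hderiv_slice i y] at key
    exact key
  have hPsum : (∑ i : Fin 4, Real.pi ^ 2 / (L i) ^ 2) * (∫ x, u x ^ 2) ≤ ∑ i : Fin 4, ∫ x, v i x ^ 2 := by
    rw [Finset.sum_mul]
    refine Finset.sum_le_sum fun i _ => ?_
    have := hP i
    rwa [div_pow] at this
  -- integration by parts per coordinate
  have hibp : ∀ i : Fin 4, ∫ x, v i x ^ 2 = - ∫ x, u x * w i x := by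
    intro i
    have hFcont : Continuous (fun x => v i x ^ 2 + u x * w i x) :=
      (((hvs i).continuous).pow 2).add (hucont.mul (hwcont i))
    have hFcs : HasCompactSupport (fun x => v i x ^ 2 + u x * w i x) :=
      (hcs_sq (hvcs i)).add (hc.mul_right)
    obtain ⟨e, _⟩ := slice_repr i (fun x => v i x ^ 2 + u x * w i x) hFcont hFcs
    have hinner : ∀ y : Fin 3 → ℝ,
        (∫ t : ℝ, (v i (i.insertNth t y) ^ 2 + u (i.insertNth t y) * w i (i.insertNth t y))) = 0 := by
      intro y
      obtain ⟨hg, hgts, hgcs⟩ := hslice i y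
      have hgv : ContDiff ℝ (⊤ : ℕ∞) (fun t : ℝ => v i (i.insertNth t y)) :=
        (hvs i).comp (contDiff_insertNth i y)
      have heq : (fun t : ℝ => v i (i.insertNth t y) ^ 2 + u (i.insertNth t y) * w i (i.insertNth t y))
          = deriv (fun t : ℝ => u (i.insertNth t y) * v i (i.insertNth t y)) := by
        funext t
        rw [deriv_fun_mul ((hg.differentiable (by simp)).differentiableAt)
          ((hgv.differentiable (by simp)).differentiableAt),
          hderiv_slice i y t, hderiv2_slice i y t]
        ring
      rw [heq, integral_deriv_zero (hg.mul hgv) hgcs.mul_right]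
    have hzero : ∫ x, (v i x ^ 2 + u x * w i x) = 0 := by
      rw [e]
      calc (∫ y : Fin 3 → ℝ, ∫ t : ℝ,
            ((fun x => v i x ^ 2 + u x * w i x) (i.insertNth t y)))
          = ∫ _y : Fin 3 → ℝ, (0:ℝ) := by
            refine integral_congr_ae (Filter.Eventually.of_forall fun y => ?_)
            exact hinner y
      _ = 0 := by simp
    rw [integral_add (hIv2 i) (hIuw i)] at hzero
    linarith
  -- sum up: Σ ∫ v² = ∫ (-u)·Δ
  have hInw : ∀ i : Fin 4, Integrable (fun x => -(u x * w i x)) := fun i =>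
    ((hucont.mul (hwcont i)).neg).integrable_of_hasCompactSupport (hcs_neg hc.mul_right)
  have hsum2 : ∑ i : Fin 4, ∫ x, v i x ^ 2 = ∫ x, (-u x) * Δ x := by
    calc ∑ i : Fin 4, ∫ x, v i x ^ 2
        = ∑ i : Fin 4, ∫ x, -(u x * w i x) := by
          refine Finset.sum_congr rfl fun i _ => ?_
          rw [hibp i, ← integral_neg]
      _ = ∫ x, ∑ i : Fin 4, -(u x * w i x) :=
          (integral_finset_sum _ fun i _ => hInw i).symm
      _ = ∫ x, (-u x) * Δ x := by
          refine integral_congr_ae (Filter.Eventually.of_forall fun x => ?_)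
          rw [hΔ]
          simp [Finset.mul_sum]
  -- Cauchy-Schwarz
  have hcs2 : ∫ x, (-u x) * Δ x ≤ Real.sqrt (∫ x, u x ^ 2) * Real.sqrt (∫ x, Δ x ^ 2) := by
    have hnegsq : (fun x => (-u x) ^ 2) = fun x => u x ^ 2 := by funext x; ring
    have hInΔ : Integrable (fun x => -u x * Δ x) :=
      ((hucont.neg).mul hΔcont).integrable_of_hasCompactSupport ((hcs_neg hc).mul_right)
    have := cs_integral (f := fun x => -u x) (h := Δ) (μ := volume)
      (by rw [hnegsq]; exact hIu2) hIΔ2 hInΔ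
    rwa [hnegsq] at this
  -- combine
  set N := ∫ x, u x ^ 2 with hN
  set M := ∫ x, Δ x ^ 2 with hM
  have hNnn : 0 ≤ N := integral_nonneg fun x => sq_nonneg _
  have hchain : (∑ i : Fin 4, Real.pi ^ 2 / (L i) ^ 2) * N ≤ Real.sqrt N * Real.sqrt M := by
    calc (∑ i : Fin 4, Real.pi ^ 2 / (L i) ^ 2) * N ≤ ∑ i : Fin 4, ∫ x, v i x ^ 2 := hPsum
    _ = ∫ x, (-u x) * Δ x := hsum2
    _ ≤ Real.sqrt N * Real.sqrt M := hcs2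
  rcases eq_or_lt_of_le hNnn with hN0 | hNpos
  · rw [← hN0, Real.sqrt_zero, mul_zero]
    exact Real.sqrt_nonneg M
  · have hsq : Real.sqrt N * Real.sqrt N = N := Real.mul_self_sqrt hNnn
    have hsp : 0 < Real.sqrt N := Real.sqrt_pos.2 hNpos
    have hchain' : (∑ i : Fin 4, Real.pi ^ 2 / (L i) ^ 2) * (Real.sqrt N * Real.sqrt N)
        ≤ Real.sqrt N * Real.sqrt M := by rw [hsq]; exact hchain
    nlinarith [hchain', hsp]


/-- **Second-order Poincaré-type inequality.** If `Ω ⊆ D = Πᵢ (0, Lᵢ)` is open,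
`χ = Σᵢ π²/Lᵢ²`, and `u : ℝ⁴ → ℝ` is smooth with compact support in `Ω`, then
`χ ‖u‖_{L²(Ω)} ≤ ‖Δu‖_{L²(Ω)}`. -/
theorem second_order_poincare (L : Fin 4 → ℝ) (hL : ∀ i, 0 < L i)
    (Ω : Set (Fin 4 → ℝ)) (hΩopen : IsOpen Ω)
    (hΩD : Ω ⊆ {x : Fin 4 → ℝ | ∀ i, x i ∈ Ioo 0 (L i)})
    (u : (Fin 4 → ℝ) → ℝ) (hu : ContDiff ℝ (⊤ : ℕ∞) u)
    (hc : HasCompactSupport u) (hsupp : tsupport u ⊆ Ω) :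
    (∑ i : Fin 4, Real.pi ^ 2 / (L i) ^ 2) * Real.sqrt (∫ x in Ω, (u x) ^ 2) ≤
      Real.sqrt (∫ x in Ω,
        (∑ i : Fin 4,
          fderiv ℝ (fun y => fderiv ℝ u y (Pi.single i 1)) x (Pi.single i 1)) ^ 2) :=
  main_aux L hL Ω hΩD u hu hc hsupp
    (fun i x => fderiv ℝ u x (Pi.single i 1))
    (fun i x => fderiv ℝ (fun y => fderiv ℝ u y (Pi.single i 1)) x (Pi.single i 1))
    (fun _ => rfl) (fun _ => rfl)
end

section
/- Exponential decay of the kinetic energy (Theorem 3.2, estimate (3.13)): let L₁,…,L₄ > 0, D = Π_{i=1}^4 (0,L_i), Ω ⊆ D open, ν > 0, χ = Σ_{i=1}^4 π²/L_i², and let K ⊂ Ω be compact. Suppose u : ℝ⁴ × [0,∞) → ℝ⁴ and p : ℝ⁴ × [0,∞) → ℝ are smooth, u(·,t) has support contained in K for every t ≥ 0, u is divergence-free (Σ_{i=1}^4 ∂u_i/∂x_i = 0), and u, p satisfy the Navier–Stokes equations ∂_t u_j + Σ_{i=1}^4 u_i ∂u_j/∂x_i − ν Δu_j + ∂p/∂x_j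 = 0 for j = 1,…,4 on Ω × (0,∞). Then for all t ≥ 0, ‖u(·,t)‖²_{L²(Ω)} ≤ ‖u(·,0)‖²_{L²(Ω)} e^{−2νχ t}. -/
open MeasureTheory Set



noncomputable def pd (i : Fin 4) (f : (Fin 4 → ℝ) → ℝ) (x : Fin 4 → ℝ) : ℝ :=
  fderiv ℝ f x (Pi.single i 1)

lemma pd_contDiff {f : (Fin 4 → ℝ) → ℝ} (hf : ContDiff ℝ (⊤ : ℕ∞) f) (i : Fin 4) :
    ContDiff ℝ (⊤ : ℕ∞) (pd i f) :=
  (hf.fderiv_right (by simp)).clm_apply contDiff_const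

lemma pd_continuous {f : (Fin 4 → ℝ) → ℝ} (hf : ContDiff ℝ (⊤ : ℕ∞) f) (i : Fin 4) :
    Continuous (pd i f) := (pd_contDiff hf i).continuous

lemma pd_eq_zero_of_eventually_zero {f : (Fin 4 → ℝ) → ℝ} {x : Fin 4 → ℝ}
    (h : f =ᶠ[nhds x] 0) (i : Fin 4) : pd i f x = 0 := by
  have : fderiv ℝ f x = fderiv ℝ (fun _ => (0:ℝ)) x := Filter.EventuallyEq.fderiv_eq h
  simp [pd, this]

lemma pd_support_subset {f : (Fin 4 → ℝ) → ℝ} (i : Fin 4) :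
    Function.support (pd i f) ⊆ tsupport f := by
  intro x hx
  by_contra hxt
  have hopen : IsOpen (tsupport f)ᶜ := (isClosed_tsupport f).isOpen_compl
  have hev : f =ᶠ[nhds x] 0 := by
    filter_upwards [hopen.mem_nhds hxt] with y hy
    exact image_eq_zero_of_notMem_tsupport hy
  exact hx (pd_eq_zero_of_eventually_zero hev i)

lemma pd_tsupport_subset {f : (Fin 4 → ℝ) → ℝ} (i : Fin 4) :
    tsupport (pd i f) ⊆ tsupport f :=
  closure_minimal (pd_support_subset i) (isClosed_tsupport f)

lemma pd_hasCompactSupport {f : (Fin 4 → ℝ) → ℝ} (hf : HasCompactSupport f) (i : Fin 4) :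
    HasCompactSupport (pd i f) :=
  hf.of_isClosed_subset (isClosed_tsupport _) (pd_tsupport_subset i)

lemma pd_mul {f g : (Fin 4 → ℝ) → ℝ} (hf : ContDiff ℝ (⊤ : ℕ∞) f) (hg : ContDiff ℝ (⊤ : ℕ∞) g)
    (i : Fin 4) (x : Fin 4 → ℝ) :
    pd i (fun y => f y * g y) x = f x * pd i g x + g x * pd i f x := by
  have := fderiv_fun_mul (𝕜 := ℝ) (hf.differentiable (by simp) x) (hg.differentiable (by simp) x)
  simp only [pd, this, ContinuousLinearMap.add_apply, ContinuousLinearMap.smul_apply,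
    smul_eq_mul]

lemma pd_sum {ι : Type*} (s : Finset ι) {f : ι → (Fin 4 → ℝ) → ℝ}
    (hf : ∀ k ∈ s, ContDiff ℝ (⊤ : ℕ∞) (f k)) (i : Fin 4) (x : Fin 4 → ℝ) :
    pd i (fun y => ∑ k ∈ s, f k y) x = ∑ k ∈ s, pd i (f k) x := by
  have : fderiv ℝ (fun y => ∑ k ∈ s, f k y) x = ∑ k ∈ s, fderiv ℝ (f k) x :=
    fderiv_fun_sum (fun k hk => (hf k hk).differentiable (by simp) x)
  simp [pd, this]

/-- Integral of a partial derivative of a compactly supported smooth function vanishes. -/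
lemma integral_pd_eq_zero {f : (Fin 4 → ℝ) → ℝ} (hf : ContDiff ℝ (⊤ : ℕ∞) f)
    (hcf : HasCompactSupport f) (i : Fin 4) :
    ∫ x, pd i f x = 0 := by
  have h := integral_mul_fderiv_eq_neg_fderiv_mul_of_integrable
    (𝕜 := ℝ) (μ := (volume : Measure (Fin 4 → ℝ)))
    (f := fun _ => (1:ℝ)) (g := f) (v := Pi.single i 1)
    ?_ ?_ ?_ (fun x _ => differentiableAt_const (1:ℝ)) (fun x _ => hf.differentiable (by simp) x)
  · simpa [pd] using h
  · simp only [fderiv_fun_const, Pi.zero_apply, ContinuousLinearMap.zero_apply, zero_mul]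
    exact integrable_zero _ _ _
  · have : Integrable (fun x => pd i f x) := (pd_continuous hf i).integrable_of_hasCompactSupport
      (pd_hasCompactSupport hcf i)
    simpa [pd] using this
  · simpa using hf.continuous.integrable_of_hasCompactSupport hcf


lemma hasFDerivAt_coord (c : ℝ) (i : Fin 4) (x : Fin 4 → ℝ) :
    HasFDerivAt (fun y : Fin 4 → ℝ => c * y i)
      (c • (ContinuousLinearMap.proj i : (Fin 4 → ℝ) →L[ℝ] ℝ)) x := by
  have h : HasFDerivAt (fun y : Fin 4 → ℝ => y i)
      (ContinuousLinearMap.proj i : (Fin 4 → ℝ) →L[ℝ] ℝ) x :=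
    (ContinuousLinearMap.proj i : (Fin 4 → ℝ) →L[ℝ] ℝ).hasFDerivAt
  exact h.const_mul c

lemma pd_sin (c : ℝ) (i : Fin 4) (x : Fin 4 → ℝ) :
    pd i (fun y => Real.sin (c * y i)) x = c * Real.cos (c * x i) := by
  have h := (Real.hasDerivAt_sin (c * x i)).comp_hasFDerivAt x (hasFDerivAt_coord c i x)
  have h' : HasFDerivAt (fun y : Fin 4 → ℝ => Real.sin (c * y i))
      (Real.cos (c * x i) • c • (ContinuousLinearMap.proj i : (Fin 4 → ℝ) →L[ℝ] ℝ)) x := h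
  rw [pd, h'.fderiv]
  simp [Pi.single_eq_same, mul_comm]

lemma pd_cos (c : ℝ) (i : Fin 4) (x : Fin 4 → ℝ) :
    pd i (fun y => c * Real.cos (c * y i)) x = -(c^2) * Real.sin (c * x i) := by
  have h := ((Real.hasDerivAt_cos (c * x i)).comp_hasFDerivAt x
    (hasFDerivAt_coord c i x)).const_mul c
  have h' : HasFDerivAt (fun y : Fin 4 → ℝ => c * Real.cos (c * y i))
      (c • (-Real.sin (c * x i)) • c • (ContinuousLinearMap.proj i : (Fin 4 → ℝ) →L[ℝ] ℝ))
      x := h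
  rw [pd, h'.fderiv]
  simp [Pi.single_eq_same]
  ring

lemma contDiff_sin_coord (c : ℝ) (i : Fin 4) :
    ContDiff ℝ (⊤ : ℕ∞) (fun y : Fin 4 → ℝ => Real.sin (c * y i)) :=
  Real.contDiff_sin.comp (contDiff_const.mul
    (ContinuousLinearMap.proj (R := ℝ) (φ := fun _ : Fin 4 => ℝ) i).contDiff)

lemma contDiff_cos_coord (c : ℝ) (i : Fin 4) :
    ContDiff ℝ (⊤ : ℕ∞) (fun y : Fin 4 → ℝ => c * Real.cos (c * y i)) :=
  contDiff_const.mul (Real.contDiff_cos.comp (contDiff_const.mul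
    (ContinuousLinearMap.proj (R := ℝ) (φ := fun _ : Fin 4 => ℝ) i).contDiff))

/-- 1-directional sharp Poincaré inequality. -/
lemma poincare_dir (i : Fin 4) {f : (Fin 4 → ℝ) → ℝ} (hf : ContDiff ℝ (⊤ : ℕ∞) f)
    (hcf : HasCompactSupport f) {l : ℝ} (hl : 0 < l)
    (hb : ∀ x ∈ tsupport f, x i ∈ Ioo 0 l) :
    Real.pi ^ 2 / l ^ 2 * ∫ x, (f x) ^ 2 ≤ ∫ x, (pd i f x) ^ 2 := by
  set c : ℝ := Real.pi / l with hc
  have hcpos : 0 < c := div_pos Real.pi_pos hl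
  set w : (Fin 4 → ℝ) → ℝ := fun y => Real.sin (c * y i) with hw
  set W : (Fin 4 → ℝ) → ℝ := fun y => c * Real.cos (c * y i) with hW
  have hwsm : ContDiff ℝ (⊤ : ℕ∞) w := contDiff_sin_coord c i
  have hWsm : ContDiff ℝ (⊤ : ℕ∞) W := contDiff_cos_coord c i
  have hwpos : ∀ x ∈ tsupport f, 0 < w x := by
    intro x hx
    rcases hb x hx with ⟨h1, h2⟩
    apply Real.sin_pos_of_pos_of_lt_pi (by positivity)
    have h3 : c * x i < c * l := mul_lt_mul_of_pos_left h2 hcpos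
    rwa [hc, div_mul_cancel₀ _ hl.ne'] at h3
  set g : (Fin 4 → ℝ) → ℝ := fun y => f y / w y with hg
  have hgsm : ContDiff ℝ (⊤ : ℕ∞) g := by
    rw [contDiff_iff_contDiffAt]
    intro x
    by_cases hx : x ∈ tsupport f
    · exact hf.contDiffAt.div hwsm.contDiffAt (hwpos x hx).ne'
    · have hopen : IsOpen (tsupport f)ᶜ := (isClosed_tsupport f).isOpen_compl
      have hev : g =ᶠ[nhds x] (fun _ => 0) := by
        filter_upwards [hopen.mem_nhds hx] with y hy
        simp [hg, image_eq_zero_of_notMem_tsupport hy]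
      exact ContDiffAt.congr_of_eventuallyEq contDiffAt_const hev
  have hgsupp : Function.support g ⊆ Function.support f := by
    intro x hx
    simp only [Function.mem_support] at hx ⊢
    intro h0; exact hx (by simp [hg, h0])
  have hgcs : HasCompactSupport g := hcf.mono hgsupp
  have hfgw : ∀ x, f x = g x * w x := by
    intro x
    by_cases hx : f x = 0
    · simp [hg, hx]
    · have hxt : x ∈ tsupport f := subset_tsupport f hx
      rw [hg]
      exact (div_mul_cancel₀ (f x) (hwpos x hxt).ne').symm
  have hpdw : ∀ x, pd i w x = W x := fun x => pd_sin c i x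
  have hpdW : ∀ x, pd i W x = -(c^2) * w x := fun x => pd_cos c i x
  have hpdf : ∀ x, pd i f x = g x * W x + w x * pd i g x := by
    intro x
    have h1 : pd i f x = pd i (fun y => g y * w y) x := by
      congr 1; exact funext hfgw
    rw [h1, pd_mul hgsm hwsm, hpdw]
  set H : (Fin 4 → ℝ) → ℝ := fun y => (g y * g y) * (w y * W y) with hH
  have hg2sm : ContDiff ℝ (⊤ : ℕ∞) (fun y => g y * g y) := hgsm.mul hgsm
  have hwWsm : ContDiff ℝ (⊤ : ℕ∞) (fun y => w y * W y) := hwsm.mul hWsm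
  have hHsm : ContDiff ℝ (⊤ : ℕ∞) H := hg2sm.mul hwWsm
  have hHcs : HasCompactSupport H := by
    apply hgcs.mono
    intro x hx
    simp only [Function.mem_support, hH] at hx
    simp only [Function.mem_support]
    intro h0
    exact hx (by rw [h0]; ring)
  have hpdH : ∀ x, pd i H x =
      (g x * g x) * (w x * (-(c^2) * w x) + W x * W x)
        + (w x * W x) * (g x * pd i g x + g x * pd i g x) := by
    intro x
    rw [hH, pd_mul hg2sm hwWsm, pd_mul hwsm hWsm, pd_mul hgsm hgsm, hpdw, hpdW]
  have key : ∀ x, (pd i f x)^2 = (w x * pd i g x)^2 + pd i H x + c^2 * (f x)^2 := by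
    intro x
    rw [hpdf, hpdH, hfgw x]
    ring
  -- integrability
  have hint1 : Integrable (fun x => (w x * pd i g x)^2) := by
    apply Continuous.integrable_of_hasCompactSupport
    · exact ((hwsm.continuous.mul (pd_continuous hgsm i)).pow 2)
    · apply (pd_hasCompactSupport hgcs i).mono
      intro x hx
      simp only [Function.mem_support] at hx ⊢
      intro h0; exact hx (by simp [h0])
  have hint2 : Integrable (fun x => pd i H x) :=
    (pd_continuous hHsm i).integrable_of_hasCompactSupport (pd_hasCompactSupport hHcs i)
  have hint3 : Integrable (fun x => c^2 * (f x)^2) := by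
    apply Integrable.const_mul
    apply ((hf.continuous.pow 2)).integrable_of_hasCompactSupport
    apply hcf.mono
    intro x hx
    simp only [Function.mem_support] at hx ⊢
    intro h0; exact hx (by simp [h0])
  have hsplit : ∫ x, (pd i f x)^2
      = (∫ x, (w x * pd i g x)^2) + (∫ x, pd i H x) + ∫ x, c^2 * (f x)^2 := by
    have e1 : ∫ x, (pd i f x)^2
        = ∫ x, ((w x * pd i g x)^2 + pd i H x + c^2 * (f x)^2) :=
      integral_congr_ae (Filter.Eventually.of_forall (fun x => key x))
    rw [e1, integral_add (f := fun x => (w x * pd i g x)^2 + pd i H x)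
      (g := fun x => c^2 * (f x)^2) (hint1.add hint2) hint3,
      integral_add (f := fun x => (w x * pd i g x)^2) (g := fun x => pd i H x) hint1 hint2]
  rw [hsplit, integral_pd_eq_zero hHsm hHcs, integral_const_mul]
  have h1 : 0 ≤ ∫ x, (w x * pd i g x)^2 := integral_nonneg (fun x => sq_nonneg _)
  have h2 : c^2 = Real.pi^2 / l^2 := by rw [hc, div_pow]
  rw [h2]
  linarith [h1]

/-- product with a compactly supported continuous left factor is integrable -/
lemma integrable_mul_cs {f g : (Fin 4 → ℝ) → ℝ} (hf : Continuous f) (hg : Continuous g)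
    (hcf : HasCompactSupport f) : Integrable (fun x => f x * g x) := by
  apply (hf.mul hg).integrable_of_hasCompactSupport
  apply hcf.mono
  intro x hx
  simp only [Function.mem_support] at hx ⊢
  intro h0; exact hx (by show f x * g x = 0; rw [h0, zero_mul])

lemma sq_cs {f : (Fin 4 → ℝ) → ℝ} (hcf : HasCompactSupport f) :
    HasCompactSupport (fun x => (f x)^2) := by
  apply hcf.mono
  intro x hx
  simp only [Function.mem_support] at hx ⊢
  intro h0; exact hx (by rw [h0]; ring)

lemma viscous_ibp {f : (Fin 4 → ℝ) → ℝ} (hf : ContDiff ℝ (⊤ : ℕ∞) f) (hcf : HasCompactSupport f)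
    (i : Fin 4) :
    ∫ x, f x * pd i (pd i f) x = - ∫ x, (pd i f x)^2 := by
  have hpdf : ContDiff ℝ (⊤ : ℕ∞) (pd i f) := pd_contDiff hf i
  have hphi : ContDiff ℝ (⊤ : ℕ∞) (fun y => f y * pd i f y) := hf.mul hpdf
  have hphics : HasCompactSupport (fun y => f y * pd i f y) := by
    apply hcf.mono
    intro x hx
    simp only [Function.mem_support] at hx ⊢
    intro h0; exact hx (by rw [h0, zero_mul])
  have h0 : ∫ x, pd i (fun y => f y * pd i f y) x = 0 := integral_pd_eq_zero hphi hphics i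
  have hexp : (fun x => pd i (fun y => f y * pd i f y) x)
      = fun x => f x * pd i (pd i f) x + (pd i f x)^2 := by
    funext x
    rw [pd_mul hf hpdf]
    ring
  rw [hexp] at h0
  have hint1 : Integrable (fun x => f x * pd i (pd i f) x) :=
    integrable_mul_cs hf.continuous (pd_continuous hpdf i) hcf
  have hint2 : Integrable (fun x => (pd i f x)^2) :=
    ((pd_continuous hf i).pow 2).integrable_of_hasCompactSupport
      (sq_cs (pd_hasCompactSupport hcf i))
  rw [integral_add hint1 hint2] at h0
  linarith

lemma pressure_ibp {v : Fin 4 → (Fin 4 → ℝ) → ℝ} {q : (Fin 4 → ℝ) → ℝ}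
    (hv : ∀ j, ContDiff ℝ (⊤ : ℕ∞) (v j)) (hcv : ∀ j, HasCompactSupport (v j))
    (hq : ContDiff ℝ (⊤ : ℕ∞) q) (hdiv : ∀ x, ∑ i, pd i (v i) x = 0) :
    ∑ j, ∫ x, v j x * pd j q x = 0 := by
  have key : ∀ j : Fin 4, ∫ x, v j x * pd j q x = - ∫ x, q x * pd j (v j) x := by
    intro j
    have hphi : ContDiff ℝ (⊤ : ℕ∞) (fun y => v j y * q y) := (hv j).mul hq
    have hphics : HasCompactSupport (fun y => v j y * q y) := by
      apply (hcv j).mono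
      intro x hx
      simp only [Function.mem_support] at hx ⊢
      intro h0; exact hx (by rw [h0, zero_mul])
    have h0 : ∫ x, pd j (fun y => v j y * q y) x = 0 := integral_pd_eq_zero hphi hphics j
    have hexp : (fun x => pd j (fun y => v j y * q y) x)
        = fun x => v j x * pd j q x + q x * pd j (v j) x := by
      funext x; rw [pd_mul (hv j) hq]
    rw [hexp] at h0
    have hint1 : Integrable (fun x => v j x * pd j q x) :=
      integrable_mul_cs (hv j).continuous (pd_continuous hq j) (hcv j)
    have hint2 : Integrable (fun x => q x * pd j (v j) x) := by
      have := integrable_mul_cs (pd_continuous (hv j) j) hq.continuous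
        (pd_hasCompactSupport (hcv j) j)
      simpa [mul_comm] using this
    rw [integral_add hint1 hint2] at h0
    linarith
  have h2 : ∑ j : Fin 4, ∫ x, q x * pd j (v j) x = 0 := by
    rw [← integral_finset_sum]
    · have : (fun x => ∑ j : Fin 4, q x * pd j (v j) x) = fun _ => (0:ℝ) := by
        funext x
        rw [← Finset.mul_sum, hdiv x, mul_zero]
      rw [this, integral_zero]
    · intro j _
      have := integrable_mul_cs (pd_continuous (hv j) j) hq.continuous
        (pd_hasCompactSupport (hcv j) j)
      simpa [mul_comm] using this
  calc ∑ j : Fin 4, ∫ x, v j x * pd j q x = ∑ j : Fin 4, - ∫ x, q x * pd j (v j) x :=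
        Finset.sum_congr rfl fun j _ => key j
    _ = - ∑ j : Fin 4, ∫ x, q x * pd j (v j) x := by rw [Finset.sum_neg_distrib]
    _ = 0 := by rw [h2, neg_zero]

lemma convective_ibp {v : Fin 4 → (Fin 4 → ℝ) → ℝ}
    (hv : ∀ j, ContDiff ℝ (⊤ : ℕ∞) (v j)) (hcv : ∀ j, HasCompactSupport (v j))
    (hdiv : ∀ x, ∑ i, pd i (v i) x = 0) :
    ∑ j, ∑ i, ∫ x, v i x * (v j x * pd i (v j) x) = 0 := by
  set Q : (Fin 4 → ℝ) → ℝ := fun x => ∑ j : Fin 4, v j x * v j x with hQ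
  have hQsm : ContDiff ℝ (⊤ : ℕ∞) Q := ContDiff.sum fun j _ => (hv j).mul (hv j)
  have hpdQ : ∀ i x, pd i Q x = ∑ j : Fin 4, (v j x * pd i (v j) x + v j x * pd i (v j) x) := by
    intro i x
    rw [hQ, pd_sum Finset.univ (fun j _ => (hv j).mul (hv j)) i x]
    exact Finset.sum_congr rfl fun j _ => pd_mul (hv j) (hv j) i x
  have key : ∀ i : Fin 4, ∫ x, v i x * pd i Q x = - ∫ x, Q x * pd i (v i) x := by
    intro i
    have hphi : ContDiff ℝ (⊤ : ℕ∞) (fun y => v i y * Q y) := (hv i).mul hQsm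
    have hphics : HasCompactSupport (fun y => v i y * Q y) := by
      apply (hcv i).mono
      intro x hx
      simp only [Function.mem_support] at hx ⊢
      intro h0; exact hx (by rw [h0, zero_mul])
    have h0 : ∫ x, pd i (fun y => v i y * Q y) x = 0 := integral_pd_eq_zero hphi hphics i
    have hexp : (fun x => pd i (fun y => v i y * Q y) x)
        = fun x => v i x * pd i Q x + Q x * pd i (v i) x := by
      funext x; rw [pd_mul (hv i) hQsm]
    rw [hexp] at h0
    have hint1 : Integrable (fun x => v i x * pd i Q x) :=
      integrable_mul_cs (hv i).continuous (pd_continuous hQsm i) (hcv i)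
    have hint2 : Integrable (fun x => Q x * pd i (v i) x) := by
      have := integrable_mul_cs (pd_continuous (hv i) i) hQsm.continuous
        (pd_hasCompactSupport (hcv i) i)
      simpa [mul_comm] using this
    rw [integral_add hint1 hint2] at h0
    linarith
  have h2 : ∑ i : Fin 4, ∫ x, Q x * pd i (v i) x = 0 := by
    rw [← integral_finset_sum]
    · have : (fun x => ∑ i : Fin 4, Q x * pd i (v i) x) = fun _ => (0:ℝ) := by
        funext x; rw [← Finset.mul_sum, hdiv x, mul_zero]
      rw [this, integral_zero]
    · intro i _
      have := integrable_mul_cs (pd_continuous (hv i) i) hQsm.continuous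
        (pd_hasCompactSupport (hcv i) i)
      simpa [mul_comm] using this
  have h4 : ∀ i : Fin 4, ∫ x, v i x * pd i Q x
      = 2 * ∑ j : Fin 4, ∫ x, v i x * (v j x * pd i (v j) x) := by
    intro i
    have e : (fun x => v i x * pd i Q x)
        = fun x => ∑ j : Fin 4, 2 * (v i x * (v j x * pd i (v j) x)) := by
      funext x
      rw [hpdQ i x, Finset.mul_sum]
      exact Finset.sum_congr rfl fun j _ => by ring
    rw [e, integral_finset_sum]
    · simp_rw [integral_const_mul]
      rw [← Finset.mul_sum]
    · intro j _
      exact (integrable_mul_cs (hv i).continuous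
        ((hv j).continuous.mul (pd_continuous (hv j) i)) (hcv i)).const_mul 2
  have h3 : ∑ i : Fin 4, ∫ x, v i x * pd i Q x = 0 := by
    have e := Finset.sum_congr rfl fun i (_ : i ∈ (Finset.univ : Finset (Fin 4))) => key i
    rw [e, Finset.sum_neg_distrib, h2, neg_zero]
  have h5 : 2 * ∑ i : Fin 4, ∑ j : Fin 4, ∫ x, v i x * (v j x * pd i (v j) x) = 0 := by
    have e := Finset.sum_congr rfl fun i (_ : i ∈ (Finset.univ : Finset (Fin 4))) => h4 i
    rw [e, ← Finset.mul_sum] at h3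
    exact h3
  rw [Finset.sum_comm]
  linarith
lemma energy_step (ν : ℝ) {v : Fin 4 → (Fin 4 → ℝ) → ℝ} {q : (Fin 4 → ℝ) → ℝ}
    {d : Fin 4 → (Fin 4 → ℝ) → ℝ}
    (hv : ∀ j, ContDiff ℝ (⊤ : ℕ∞) (v j)) (hcv : ∀ j, HasCompactSupport (v j))
    (hq : ContDiff ℝ (⊤ : ℕ∞) q) (hdiv : ∀ x, ∑ i, pd i (v i) x = 0)
    (heq : ∀ j x, v j x * d j x
      = ν * (∑ i, v j x * pd i (pd i (v j)) x)
        - (∑ i, v i x * (v j x * pd i (v j) x)) - v j x * pd j q x) :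
    ∑ j, ∫ x, 2 * v j x * d j x = -2 * ν * ∑ j, ∑ i, ∫ x, (pd i (v j) x)^2 := by
  have hIj : ∀ j, ∫ x, v j x * d j x
      = ν * (∑ i : Fin 4, ∫ x, v j x * pd i (pd i (v j)) x)
        - (∑ i : Fin 4, ∫ x, v i x * (v j x * pd i (v j) x))
        - ∫ x, v j x * pd j q x := by
    intro j
    have hA : Integrable (fun x => ∑ i : Fin 4, v j x * pd i (pd i (v j)) x) :=
      integrable_finset_sum _ fun i _ => integrable_mul_cs (hv j).continuous
        (pd_continuous (pd_contDiff (hv j) i) i) (hcv j)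
    have hB : Integrable (fun x => ∑ i : Fin 4, v i x * (v j x * pd i (v j) x)) :=
      integrable_finset_sum _ fun i _ => integrable_mul_cs (hv i).continuous
        ((hv j).continuous.mul (pd_continuous (hv j) i)) (hcv i)
    have hC : Integrable (fun x => v j x * pd j q x) :=
      integrable_mul_cs (hv j).continuous (pd_continuous hq j) (hcv j)
    have e : (fun x => v j x * d j x)
        = fun x => ν * (∑ i : Fin 4, v j x * pd i (pd i (v j)) x)
            - (∑ i : Fin 4, v i x * (v j x * pd i (v j) x)) - v j x * pd j q x :=
      funext (fun x => heq j x)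
    rw [e, integral_sub
        (f := fun x => ν * (∑ i : Fin 4, v j x * pd i (pd i (v j)) x)
          - ∑ i : Fin 4, v i x * (v j x * pd i (v j) x))
        (g := fun x => v j x * pd j q x) ((hA.const_mul ν).sub hB) hC,
      integral_sub (f := fun x => ν * (∑ i : Fin 4, v j x * pd i (pd i (v j)) x))
        (g := fun x => ∑ i : Fin 4, v i x * (v j x * pd i (v j) x)) (hA.const_mul ν) hB,
      integral_const_mul,
      integral_finset_sum _ (fun i _ => integrable_mul_cs (hv j).continuous
        (pd_continuous (pd_contDiff (hv j) i) i) (hcv j)),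
      integral_finset_sum _ (fun i _ => (integrable_mul_cs (hv i).continuous
        ((hv j).continuous.mul (pd_continuous (hv j) i)) (hcv i) :
          Integrable (fun x => v i x * (v j x * pd i (v j) x))))]
  have step2 : ∀ j : Fin 4, ∫ x, 2 * v j x * d j x = 2 * ∫ x, v j x * d j x := by
    intro j
    simp_rw [mul_assoc]
    exact integral_const_mul 2 _
  calc ∑ j : Fin 4, ∫ x, 2 * v j x * d j x
      = ∑ j : Fin 4, 2 * ∫ x, v j x * d j x := Finset.sum_congr rfl fun j _ => step2 j
    _ = 2 * ∑ j : Fin 4, ∫ x, v j x * d j x := (Finset.mul_sum _ _ _).symm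
    _ = 2 * ∑ j : Fin 4, (ν * (∑ i : Fin 4, ∫ x, v j x * pd i (pd i (v j)) x)
          - (∑ i : Fin 4, ∫ x, v i x * (v j x * pd i (v j) x))
          - ∫ x, v j x * pd j q x) := by
        rw [Finset.sum_congr rfl fun j _ => hIj j]
    _ = 2 * ((ν * ∑ j : Fin 4, ∑ i : Fin 4, ∫ x, v j x * pd i (pd i (v j)) x)
          - (∑ j : Fin 4, ∑ i : Fin 4, ∫ x, v i x * (v j x * pd i (v j) x))
          - ∑ j : Fin 4, ∫ x, v j x * pd j q x) := by
        rw [Finset.sum_sub_distrib, Finset.sum_sub_distrib, Finset.mul_sum]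
    _ = 2 * (ν * ∑ j : Fin 4, ∑ i : Fin 4, ∫ x, v j x * pd i (pd i (v j)) x) := by
        rw [convective_ibp hv hcv hdiv, pressure_ibp hv hcv hq hdiv]
        ring
    _ = -2 * ν * ∑ j : Fin 4, ∑ i : Fin 4, ∫ x, (pd i (v j) x)^2 := by
        rw [Finset.sum_congr rfl (fun j _ => Finset.sum_congr rfl
          (fun i _ => viscous_ibp (hv j) (hcv j) i))]
        rw [Finset.sum_congr rfl (fun j _ => Finset.sum_neg_distrib (f := _)), Finset.sum_neg_distrib]
        ring

/-- **Exponential decay of the kinetic energy** (Theorem 3.2, estimate (3.13)).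
For a smooth, spatially compactly supported, divergence-free solution `(u, p)` of the 4D
Navier–Stokes equations on `Ω × (0,∞)` with `Ω ⊆ D = Πᵢ (0, Lᵢ)`, one has
`‖u(·,t)‖²_{L²(Ω)} ≤ ‖u(·,0)‖²_{L²(Ω)} e^{-2νχt}` where `χ = Σᵢ π²/Lᵢ²`. -/
theorem energy_exponential_decay
    (L : Fin 4 → ℝ) (hL : ∀ i, 0 < L i)
    (Ω : Set (Fin 4 → ℝ)) (hΩopen : IsOpen Ω)
    (hΩD : Ω ⊆ {x : Fin 4 → ℝ | ∀ i, x i ∈ Ioo 0 (L i)})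
    (ν : ℝ) (hν : 0 < ν)
    (K : Set (Fin 4 → ℝ)) (hK : IsCompact K) (hKΩ : K ⊆ Ω)
    (u : (Fin 4 → ℝ) → ℝ → Fin 4 → ℝ) (p : (Fin 4 → ℝ) → ℝ → ℝ)
    (hu : ContDiffOn ℝ (⊤ : ℕ∞) (fun q : (Fin 4 → ℝ) × ℝ => u q.1 q.2) (univ ×ˢ Ici 0))
    (hp : ContDiffOn ℝ (⊤ : ℕ∞) (fun q : (Fin 4 → ℝ) × ℝ => p q.1 q.2) (univ ×ˢ Ici 0))
    (hsupp : ∀ t : ℝ, 0 ≤ t → tsupport (fun x => u x t) ⊆ K)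
    (hdiv : ∀ x ∈ Ω, ∀ t : ℝ, 0 ≤ t →
      ∑ i : Fin 4, fderiv ℝ (fun y => u y t i) x (Pi.single i 1) = 0)
    (hNS : ∀ x ∈ Ω, ∀ t : ℝ, 0 < t → ∀ j : Fin 4,
      deriv (fun s => u x s j) t
        + ∑ i : Fin 4, u x t i * fderiv ℝ (fun y => u y t j) x (Pi.single i 1)
        - ν * ∑ i : Fin 4,
            fderiv ℝ (fun y => fderiv ℝ (fun z => u z t j) y (Pi.single i 1)) x (Pi.single i 1)
        + fderiv ℝ (fun y => p y t) x (Pi.single j 1) = 0) :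
    ∀ t : ℝ, 0 ≤ t →
      (∑ j : Fin 4, ∫ x in Ω, (u x t j) ^ 2) ≤
        (∑ j : Fin 4, ∫ x in Ω, (u x 0 j) ^ 2) *
          Real.exp (-2 * ν * (∑ i : Fin 4, Real.pi ^ 2 / (L i) ^ 2) * t) := by
  classical
  set χ : ℝ := ∑ i : Fin 4, Real.pi ^ 2 / (L i) ^ 2 with hχdef
  have hKc : IsClosed K := hK.isClosed
  -- smoothness of spatial slices
  have hFjIci : ∀ j : Fin 4, ContDiffOn ℝ (⊤ : ℕ∞) (fun q : (Fin 4 → ℝ) × ℝ => u q.1 q.2 j)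
      (univ ×ˢ Ici 0) := fun j =>
    (ContinuousLinearMap.proj (R := ℝ) (φ := fun _ : Fin 4 => ℝ) j).contDiff.comp_contDiffOn hu
  have hcurveC : ∀ t : ℝ, ContDiffOn ℝ (⊤ : ℕ∞)
      (fun x : Fin 4 → ℝ => ((x, t) : (Fin 4 → ℝ) × ℝ)) univ :=
    fun t => (contDiff_id.prodMk contDiff_const).contDiffOn
  have husm : ∀ t : ℝ, 0 ≤ t → ∀ j : Fin 4, ContDiff ℝ (⊤ : ℕ∞) (fun x => u x t j) := by
    intro t ht j
    exact contDiffOn_univ.mp ((hFjIci j).comp (hcurveC t) (fun x _ => ⟨mem_univ _, ht⟩))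
  have hpsm : ∀ t : ℝ, 0 ≤ t → ContDiff ℝ (⊤ : ℕ∞) (fun x => p x t) := by
    intro t ht
    exact contDiffOn_univ.mp (hp.comp (hcurveC t) (fun x _ => ⟨mem_univ _, ht⟩))
  -- supports
  have hts : ∀ t : ℝ, 0 ≤ t → ∀ j, tsupport (fun x => u x t j) ⊆ K := by
    intro t ht j
    refine subset_trans (closure_mono ?_) (hsupp t ht)
    intro x hx
    simp only [Function.mem_support] at hx ⊢
    intro h0
    exact hx (by rw [h0]; rfl)
  have hcs : ∀ t : ℝ, 0 ≤ t → ∀ j, HasCompactSupport (fun x => u x t j) :=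
    fun t ht j => hK.of_isClosed_subset (isClosed_tsupport _) (hts t ht j)
  have huz : ∀ x, x ∉ K → ∀ t : ℝ, 0 ≤ t → u x t = 0 := by
    intro x hx t ht
    by_contra h0
    exact hx (hsupp t ht (subset_tsupport _ h0))
  have huzj : ∀ x, x ∉ K → ∀ t : ℝ, 0 ≤ t → ∀ j, u x t j = 0 := by
    intro x hx t ht j
    rw [huz x hx t ht]
    rfl
  have hpdz : ∀ t : ℝ, 0 ≤ t → ∀ (j i : Fin 4), ∀ x, x ∉ K →
      pd i (fun y => u y t j) x = 0 := by
    intro t ht j i x hx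
    apply pd_eq_zero_of_eventually_zero
    filter_upwards [hKc.isOpen_compl.mem_nhds hx] with y hy
    simpa using huzj y hy t ht j
  have hdivK : ∀ t : ℝ, 0 ≤ t → ∀ x, ∑ i : Fin 4, pd i (fun y => u y t i) x = 0 := by
    intro t ht x
    by_cases hx : x ∈ Ω
    · exact hdiv x hx t ht
    · exact Finset.sum_eq_zero fun i _ => hpdz t ht i i x (fun h => hx (hKΩ h))
  -- time derivative
  have hOopen : IsOpen ((univ : Set (Fin 4 → ℝ)) ×ˢ Ioi (0:ℝ)) := isOpen_univ.prod isOpen_Ioi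
  have hFj : ∀ j : Fin 4, ContDiffOn ℝ (⊤ : ℕ∞) (fun q : (Fin 4 → ℝ) × ℝ => u q.1 q.2 j)
      ((univ : Set (Fin 4 → ℝ)) ×ˢ Ioi (0:ℝ)) := fun j =>
    (hFjIci j).mono (prod_mono Subset.rfl (Ioi_subset_Ici le_rfl))
  set D : (Fin 4 → ℝ) → ℝ → Fin 4 → ℝ :=
    fun x t j => fderiv ℝ (fun q : (Fin 4 → ℝ) × ℝ => u q.1 q.2 j) (x, t) (0, 1) with hDdef
  have hD : ∀ x, ∀ t : ℝ, 0 < t → ∀ j, HasDerivAt (fun s => u x s j) (D x t j) t := by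
    intro x t htpos j
    have hmem : ((x, t) : (Fin 4 → ℝ) × ℝ) ∈ (univ : Set (Fin 4 → ℝ)) ×ˢ Ioi (0:ℝ) :=
      ⟨mem_univ _, htpos⟩
    have hca : ContDiffAt ℝ (⊤ : ℕ∞) (fun q : (Fin 4 → ℝ) × ℝ => u q.1 q.2 j) (x, t) :=
      (hFj j).contDiffAt (hOopen.mem_nhds hmem)
    have hdiffat := hca.differentiableAt (by simp)
    have hcurve : HasDerivAt (fun s : ℝ => ((x, s) : (Fin 4 → ℝ) × ℝ))
        ((0 : Fin 4 → ℝ), (1:ℝ)) t := (hasDerivAt_const t x).prodMk (hasDerivAt_id t)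
    exact hdiffat.hasFDerivAt.comp_hasDerivAt t hcurve
  have hDz : ∀ x, x ∉ K → ∀ t : ℝ, 0 < t → ∀ j, D x t j = 0 := by
    intro x hx t htpos j
    have h0 : HasDerivAt (fun s => u x s j) 0 t := by
      refine HasDerivAt.congr_of_eventuallyEq (hasDerivAt_const t (0:ℝ)) ?_
      filter_upwards [Ioi_mem_nhds htpos] with s hs
      exact huzj x hx s (le_of_lt hs) j
    exact (hD x t htpos j).unique h0
  have hDcO : ∀ j : Fin 4, ContinuousOn (fun q : (Fin 4 → ℝ) × ℝ => D q.1 q.2 j)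
      ((univ : Set (Fin 4 → ℝ)) ×ˢ Ioi (0:ℝ)) := by
    intro j
    have h1 := (hFj j).continuousOn_fderiv_of_isOpen hOopen (by simp)
    exact ((ContinuousLinearMap.apply ℝ ℝ
      (((0 : Fin 4 → ℝ), (1:ℝ)))).continuous).comp_continuousOn h1
  have hDcont : ∀ t : ℝ, 0 < t → ∀ j, Continuous fun x => D x t j := by
    intro t htpos j
    have h3 : Continuous (fun x : Fin 4 → ℝ => ((x, t) : (Fin 4 → ℝ) × ℝ)) :=
      continuous_id.prodMk continuous_const
    exact (hDcO j).comp_continuous h3 (fun x => ⟨mem_univ _, htpos⟩)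
  -- energy integrals
  have hsqint : ∀ t : ℝ, 0 ≤ t → ∀ j, Integrable (fun x => (u x t j)^2) := by
    intro t ht j
    exact ((husm t ht j).continuous.pow 2).integrable_of_hasCompactSupport (sq_cs (hcs t ht j))
  have hEeq : ∀ t : ℝ, 0 ≤ t →
      (∑ j : Fin 4, ∫ x in Ω, (u x t j)^2) = ∑ j : Fin 4, ∫ x, (u x t j)^2 := by
    intro t ht
    refine Finset.sum_congr rfl fun j _ => ?_
    apply setIntegral_eq_integral_of_forall_compl_eq_zero
    intro x hx
    rw [huzj x (fun h => hx (hKΩ h)) t ht j]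
    norm_num
  -- derivative of the energy
  have hEnderiv : ∀ t : ℝ, 0 < t →
      HasDerivAt (fun s => ∑ j : Fin 4, ∫ x, (u x s j)^2)
        (∑ j : Fin 4, ∫ x, 2 * u x t j * D x t j) t := by
    intro t htpos
    apply HasDerivAt.fun_sum
    intro j _
    obtain ⟨C, hC⟩ : ∃ C, ∀ q ∈ (K ×ˢ Icc (t/2) (t + t/2)),
        ‖2 * u q.1 q.2 j * D q.1 q.2 j‖ ≤ C := by
      apply (hK.prod isCompact_Icc).exists_bound_of_continuousOn
      apply ContinuousOn.mono
        ((continuousOn_const.mul ((hFj j).continuousOn)).mul (hDcO j))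
      rintro ⟨a, s⟩ ⟨haK, hs⟩
      exact ⟨mem_univ _, lt_of_lt_of_le (half_pos htpos) hs.1⟩
    refine (hasDerivAt_integral_of_dominated_loc_of_deriv_le (μ := volume)
      (x₀ := t) (s := Metric.ball t (t/2)) (F' := fun s x => 2 * u x s j * D x s j)
      (bound := K.indicator fun _ => C) (Metric.ball_mem_nhds t (half_pos htpos)) ?_ ?_ ?_ ?_ ?_ ?_).2
    · filter_upwards [Ioi_mem_nhds htpos] with s hs
      exact ((husm s (le_of_lt hs) j).continuous.pow 2).aestronglyMeasurable
    · exact hsqint t (le_of_lt htpos) j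
    · exact ((continuous_const.mul ((husm t htpos.le j).continuous)).mul
        (hDcont t htpos j)).aestronglyMeasurable
    · apply Filter.Eventually.of_forall
      intro x s hs
      rw [Real.ball_eq_Ioo] at hs
      have hs1 : t/2 < s := by have := hs.1; linarith
      have hs2 : s < t + t/2 := hs.2
      have hspos : 0 < s := lt_trans (half_pos htpos) hs1
      by_cases hxK : x ∈ K
      · rw [indicator_of_mem hxK]
        exact hC (x, s) ⟨hxK, ⟨le_of_lt hs1, le_of_lt hs2⟩⟩
      · rw [indicator_of_notMem hxK]
        show ‖2 * u x s j * D x s j‖ ≤ 0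
        rw [huzj x hxK s hspos.le j]
        simp
    · rw [integrable_indicator_iff hK.measurableSet]
      exact integrableOn_const hK.measure_lt_top.ne
    · apply Filter.Eventually.of_forall
      intro x s hs
      rw [Real.ball_eq_Ioo] at hs
      have hspos : 0 < s := by have := hs.1; have := half_pos htpos; linarith
      have h := (hD x s hspos j).fun_pow (n := 2)
      exact h.congr_deriv (by norm_num)
  -- energy identity
  have hstep : ∀ t : ℝ, 0 < t → (∑ j : Fin 4, ∫ x, 2 * u x t j * D x t j)
      = -2 * ν * ∑ j : Fin 4, ∑ i : Fin 4, ∫ x, (pd i (fun y => u y t j) x)^2 := by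
    intro t htpos
    have ht0 : (0:ℝ) ≤ t := htpos.le
    refine energy_step ν (v := fun j => fun y => u y t j) (q := fun y => p y t)
      (d := fun j x => D x t j)
      (fun j => husm t ht0 j) (fun j => hcs t ht0 j) (hpsm t ht0)
      (fun x => hdivK t ht0 x) ?_
    intro j x
    show u x t j * D x t j
      = ν * (∑ i : Fin 4, u x t j * pd i (pd i (fun y => u y t j)) x)
        - (∑ i : Fin 4, u x t i * (u x t j * pd i (fun y => u y t j) x))
        - u x t j * pd j (fun y => p y t) x
    by_cases hx : x ∈ Ω
    · have hns := hNS x hx t htpos j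
      rw [(hD x t htpos j).deriv] at hns
      have hns' : D x t j + (∑ i : Fin 4, u x t i * pd i (fun y => u y t j) x)
          - ν * (∑ i : Fin 4, pd i (pd i (fun y => u y t j)) x)
          + pd j (fun y => p y t) x = 0 := hns
      have e1 : (∑ i : Fin 4, u x t j * pd i (pd i (fun y => u y t j)) x)
          = u x t j * ∑ i : Fin 4, pd i (pd i (fun y => u y t j)) x :=
        (Finset.mul_sum _ _ _).symm
      have e2 : (∑ i : Fin 4, u x t i * (u x t j * pd i (fun y => u y t j) x))
          = u x t j * ∑ i : Fin 4, u x t i * pd i (fun y => u y t j) x := by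
        rw [Finset.mul_sum]
        exact Finset.sum_congr rfl fun i _ => by ring
      rw [e1, e2]
      linear_combination (u x t j) * hns'
    · have hxK : x ∉ K := fun h => hx (hKΩ h)
      have hz : ∀ i : Fin 4, u x t i = 0 := fun i => huzj x hxK t ht0 i
      rw [hz j, hDz x hxK t htpos j]
      simp [hz]
  -- Poincaré inequality
  have hpoin : ∀ t : ℝ, 0 ≤ t → ∀ j, χ * ∫ x, (u x t j)^2
      ≤ ∑ i : Fin 4, ∫ x, (pd i (fun y => u y t j) x)^2 := by
    intro t ht j
    rw [hχdef, Finset.sum_mul]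
    apply Finset.sum_le_sum
    intro i _
    refine poincare_dir i (husm t ht j) (hcs t ht j) (hL i) ?_
    intro x hx
    exact hΩD (hKΩ (hts t ht j hx)) i
  -- continuity of the energy on [0, ∞)
  have hEcont : ContinuousOn (fun s => ∑ j : Fin 4, ∫ x, (u x s j)^2) (Ici 0) := by
    intro s hs
    rcases eq_or_lt_of_le (mem_Ici.mp hs) with heq | hlt
    · subst heq
      apply tendsto_finset_sum
      intro j _
      obtain ⟨C, hC⟩ : ∃ C, ∀ q ∈ (K ×ˢ Icc (0:ℝ) 1), ‖(u q.1 q.2 j)^2‖ ≤ C := by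
        apply (hK.prod isCompact_Icc).exists_bound_of_continuousOn
        apply ContinuousOn.mono (((hFjIci j).continuousOn).pow 2)
        rintro ⟨a, r⟩ ⟨-, hr⟩
        exact ⟨mem_univ _, hr.1⟩
      apply continuousWithinAt_of_dominated (μ := volume) (bound := K.indicator fun _ => C)
      · filter_upwards [self_mem_nhdsWithin] with r hr
        exact ((husm r hr j).continuous.pow 2).aestronglyMeasurable
      · filter_upwards [Icc_mem_nhdsGE zero_lt_one] with r hr
        apply Filter.Eventually.of_forall
        intro x
        by_cases hxK : x ∈ K
        · rw [indicator_of_mem hxK]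
          exact hC (x, r) ⟨hxK, hr⟩
        · rw [indicator_of_notMem hxK, huzj x hxK r hr.1 j]
          simp
      · rw [integrable_indicator_iff hK.measurableSet]
        exact integrableOn_const hK.measure_lt_top.ne
      · apply Filter.Eventually.of_forall
        intro x
        have hq2 : ContinuousWithinAt (fun q : (Fin 4 → ℝ) × ℝ => u q.1 q.2 j)
            (univ ×ˢ Ici 0) (x, 0) :=
          (hFjIci j).continuousOn _ ⟨mem_univ _, self_mem_Ici⟩
        have hcv : ContinuousWithinAt (fun r : ℝ => ((x, r) : (Fin 4 → ℝ) × ℝ)) (Ici 0) 0 :=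
          (continuous_const.prodMk continuous_id).continuousWithinAt
        exact (hq2.comp hcv (fun r hr => ⟨mem_univ _, hr⟩)).pow 2
    · exact ((hEnderiv s hlt).continuousAt).continuousWithinAt
  -- Gronwall argument
  have hGanti : AntitoneOn
      (fun s => (∑ j : Fin 4, ∫ x, (u x s j)^2) * Real.exp (2 * ν * χ * s)) (Ici 0) := by
    apply antitoneOn_of_deriv_nonpos (convex_Ici 0)
    · exact hEcont.mul (Real.continuous_exp.comp
        (continuous_const.mul continuous_id)).continuousOn
    · rw [interior_Ici]
      intro s hspos
      have hGd : HasDerivAt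
          (fun s => (∑ j : Fin 4, ∫ x, (u x s j)^2) * Real.exp (2 * ν * χ * s))
          ((∑ j : Fin 4, ∫ x, 2 * u x s j * D x s j) * Real.exp (2 * ν * χ * s)
            + (∑ j : Fin 4, ∫ x, (u x s j)^2) * (Real.exp (2 * ν * χ * s) * (2 * ν * χ))) s := by
        refine (hEnderiv s hspos).mul ?_
        have h3 : HasDerivAt (fun r : ℝ => 2 * ν * χ * r) (2 * ν * χ) s := by
          simpa using (hasDerivAt_id s).const_mul (2 * ν * χ)
        exact h3.exp
      exact hGd.differentiableAt.differentiableWithinAt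
    · rw [interior_Ici]
      intro s hspos
      have hGd : HasDerivAt
          (fun s => (∑ j : Fin 4, ∫ x, (u x s j)^2) * Real.exp (2 * ν * χ * s))
          ((∑ j : Fin 4, ∫ x, 2 * u x s j * D x s j) * Real.exp (2 * ν * χ * s)
            + (∑ j : Fin 4, ∫ x, (u x s j)^2) * (Real.exp (2 * ν * χ * s) * (2 * ν * χ))) s := by
        refine (hEnderiv s hspos).mul ?_
        have h3 : HasDerivAt (fun r : ℝ => 2 * ν * χ * r) (2 * ν * χ) s := by
          simpa using (hasDerivAt_id s).const_mul (2 * ν * χ)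
        exact h3.exp
      rw [hGd.deriv, hstep s hspos]
      have hpe : (0:ℝ) < Real.exp (2 * ν * χ * s) := Real.exp_pos _
      have hsum : χ * (∑ j : Fin 4, ∫ x, (u x s j)^2)
          ≤ ∑ j : Fin 4, ∑ i : Fin 4, ∫ x, (pd i (fun y => u y s j) x)^2 := by
        calc χ * (∑ j : Fin 4, ∫ x, (u x s j)^2)
            = ∑ j : Fin 4, χ * ∫ x, (u x s j)^2 := Finset.mul_sum _ _ _
          _ ≤ _ := Finset.sum_le_sum fun j _ => hpoin s hspos.le j
      have hrw : (-2 * ν * ∑ j : Fin 4, ∑ i : Fin 4, ∫ x, (pd i (fun y => u y s j) x)^2)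
            * Real.exp (2 * ν * χ * s)
          + (∑ j : Fin 4, ∫ x, (u x s j)^2) * (Real.exp (2 * ν * χ * s) * (2 * ν * χ))
          = (2 * ν * Real.exp (2 * ν * χ * s))
            * (χ * (∑ j : Fin 4, ∫ x, (u x s j)^2)
              - ∑ j : Fin 4, ∑ i : Fin 4, ∫ x, (pd i (fun y => u y s j) x)^2) := by
        ring
      rw [hrw]
      apply mul_nonpos_of_nonneg_of_nonpos
      · positivity
      · linarith
  -- conclusion
  intro t ht
  rw [hEeq t ht, hEeq 0 le_rfl]
  have h1 := hGanti self_mem_Ici ht ht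
  simp only [mul_zero, Real.exp_zero, mul_one] at h1
  have hepos : (0:ℝ) < Real.exp (2 * ν * χ * t) := Real.exp_pos _
  rw [show -2 * ν * χ * t = -(2 * ν * χ * t) by ring, Real.exp_neg, ← div_eq_mul_inv,
    le_div_iff₀ hepos]
  exact h1
end

section
/- Uniqueness of regular solutions (Lemma 3.4): let Ω ⊂ ℝ⁴ be open, ν > 0, and K ⊂ Ω compact. Suppose u¹, p¹ and u², p² are two smooth solutions of the Navier–Stokes system ∂_t u_j + Σ_{i=1}^4 u_i ∂u_j/∂x_i − ν Δu_j + ∂p/∂x_j = 0 on Ω × (0,∞), each divergence-free with u^k(·,t) supported in K for all t ≥ 0, with the same initial data u¹(·,0) = u²(·,0), and suppose ν − 9 ‖∇u²(·,t)‖_{L²(Ω)} ≥ 0 for all t ≥ 0. Then u¹(·,t) = u²(·,t) for all t ≥ 0. -/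
open MeasureTheory Set Function

local notation "E4" => (Fin 4 → ℝ)

private lemma ns_slice_contDiff {F : Type*} [NormedAddCommGroup F] [NormedSpace ℝ F]
    {f : E4 × ℝ → F} (hf : ContDiffOn ℝ (⊤ : ℕ∞) f (univ ×ˢ Ici 0)) {t : ℝ} (ht : 0 ≤ t) :
    ContDiff ℝ (⊤ : ℕ∞) (fun x : E4 => f (x, t)) := by
  rw [← contDiffOn_univ]
  exact hf.comp (contDiff_id.prodMk contDiff_const).contDiffOn
    (fun x _ => ⟨mem_univ _, ht⟩)

private lemma ns_slice_contDiff_comp {u : E4 → ℝ → E4}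
    (hu : ContDiffOn ℝ (⊤ : ℕ∞) (fun q : E4 × ℝ => u q.1 q.2) (univ ×ˢ Ici 0))
    {t : ℝ} (ht : 0 ≤ t) (j : Fin 4) : ContDiff ℝ (⊤ : ℕ∞) (fun y : E4 => u y t j) :=
  (contDiff_pi.mp (ns_slice_contDiff hu ht)) j

private lemma ns_fderiv_app_contDiff {f : E4 → ℝ} (hf : ContDiff ℝ (⊤ : ℕ∞) f) (v : E4) :
    ContDiff ℝ (⊤ : ℕ∞) (fun x => fderiv ℝ f x v) :=
  (hf.fderiv_right (m := (⊤ : ℕ∞)) (by simp)).clm_apply contDiff_const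

private lemma ns_hasCompactSupport {K : Set E4} (hK : IsCompact K) {f : E4 → ℝ}
    (h : tsupport f ⊆ K) : HasCompactSupport f :=
  hK.of_isClosed_subset (isClosed_tsupport f) h

private lemma ns_support_fderiv {f : E4 → ℝ} (v : E4) :
    support (fun x => fderiv ℝ f x v) ⊆ tsupport f := by
  intro x hx
  have : fderiv ℝ f x ≠ 0 := fun h => hx (by simp [Function.mem_support, h])
  exact support_fderiv_subset ℝ (by simpa [Function.mem_support] using this)

/-- Integration by parts on `ℝ⁴`. -/
private lemma ns_ibp {K : Set E4} (hK : IsCompact K) {f g : E4 → ℝ}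
    (hf : ContDiff ℝ (⊤ : ℕ∞) f) (hg : ContDiff ℝ (⊤ : ℕ∞) g) (hfs : tsupport f ⊆ K) (v : E4) :
    ∫ x, f x * fderiv ℝ g x v = - ∫ x, fderiv ℝ f x v * g x := by
  have hcs : HasCompactSupport f := ns_hasCompactSupport hK hfs
  have h1 : Integrable (fun x => fderiv ℝ f x v * g x) volume := by
    apply Continuous.integrable_of_hasCompactSupport
    · exact (ns_fderiv_app_contDiff hf v).continuous.mul hg.continuous
    · refine (ns_hasCompactSupport hK ?_).mul_right
      exact closure_minimal ((ns_support_fderiv v).trans hfs)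
        hK.isClosed
  have h2 : Integrable (fun x => f x * fderiv ℝ g x v) volume := by
    apply Continuous.integrable_of_hasCompactSupport
    · exact hf.continuous.mul (ns_fderiv_app_contDiff hg v).continuous
    · exact hcs.mul_right
  have h3 : Integrable (fun x => f x * g x) volume := by
    apply Continuous.integrable_of_hasCompactSupport
    · exact hf.continuous.mul hg.continuous
    · exact hcs.mul_right
  exact integral_mul_fderiv_eq_neg_fderiv_mul_of_integrable h1 h2 h3
    (fun x _ => hf.differentiable (by simp) x) (fun x _ => hg.differentiable (by simp) x)


private lemma ns_open_prod : IsOpen ((univ : Set E4) ×ˢ Ioi (0:ℝ)) :=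
  isOpen_univ.prod isOpen_Ioi

section
variable {u : E4 → ℝ → E4}
  (hu : ContDiffOn ℝ (⊤ : ℕ∞) (fun q : E4 × ℝ => u q.1 q.2) (univ ×ˢ Ici 0))

include hu in
private lemma ns_contDiffOn_open :
    ContDiffOn ℝ (⊤ : ℕ∞) (fun q : E4 × ℝ => u q.1 q.2) (univ ×ˢ Ioi 0) :=
  hu.mono (prod_mono_right Ioi_subset_Ici_self)

include hu in
private lemma ns_diffAt {x : E4} {t : ℝ} (ht : 0 < t) :
    DifferentiableAt ℝ (fun q : E4 × ℝ => u q.1 q.2) (x, t) :=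
  (((ns_contDiffOn_open hu).contDiffAt
    (ns_open_prod.mem_nhds ⟨mem_univ _, mem_Ioi.mpr ht⟩))).differentiableAt (by simp)

include hu in
private lemma ns_hasDerivAt_time {x : E4} {t : ℝ} (ht : 0 < t) (j : Fin 4) :
    HasDerivAt (fun s => u x s j) (deriv (fun s => u x s j) t) t := by
  have h2 : DifferentiableAt ℝ (fun s : ℝ => ((x : E4), s)) t :=
    (differentiableAt_const x).prodMk differentiableAt_id
  have h3 : DifferentiableAt ℝ (fun s => u x s) t := (ns_diffAt hu ht).comp t h2
  exact ((differentiableAt_pi.mp h3) j).hasDerivAt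

include hu in
/-- time derivative as evaluation of the full Fréchet derivative, on the open set. -/
private lemma ns_deriv_eq {x : E4} {t : ℝ} (ht : 0 < t) (j : Fin 4) :
    deriv (fun s => u x s j) t
      = fderiv ℝ (fun q : E4 × ℝ => u q.1 q.2) (x, t) ((0 : E4), (1:ℝ)) j := by
  have h2 : HasDerivAt (fun s : ℝ => ((x : E4), s)) ((0 : E4), (1:ℝ)) t :=
    (hasDerivAt_const t x).prodMk (hasDerivAt_id t)
  have h3 : HasDerivAt (fun s => u x s)
      (fderiv ℝ (fun q : E4 × ℝ => u q.1 q.2) (x, t) ((0 : E4), (1:ℝ))) t :=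
    (ns_diffAt hu ht).hasFDerivAt.comp_hasDerivAt t h2
  have h4 : HasDerivAt (fun s => u x s j)
      (fderiv ℝ (fun q : E4 × ℝ => u q.1 q.2) (x, t) ((0 : E4), (1:ℝ)) j) t := by
    have := ((ContinuousLinearMap.proj (R := ℝ) (φ := fun _ : Fin 4 => ℝ) j)).hasFDerivAt.comp_hasDerivAt t h3
    exact this
  exact h4.deriv

include hu in
private lemma ns_timeDeriv_continuousOn (j : Fin 4) :
    ContinuousOn (fun q : E4 × ℝ => deriv (fun s => u q.1 s j) q.2)
      ((univ : Set E4) ×ˢ Ioi (0:ℝ)) := by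
  have hfd : ContinuousOn (fderiv ℝ (fun q : E4 × ℝ => u q.1 q.2))
      ((univ : Set E4) ×ˢ Ioi (0:ℝ)) :=
    (ns_contDiffOn_open hu).continuousOn_fderiv_of_isOpen ns_open_prod (by simp)
  have : ContinuousOn
      (fun q : E4 × ℝ => fderiv ℝ (fun q : E4 × ℝ => u q.1 q.2) q ((0 : E4), (1:ℝ)) j)
      ((univ : Set E4) ×ˢ Ioi (0:ℝ)) := by
    exact ((continuous_apply j).comp
      (ContinuousLinearMap.apply ℝ (Fin 4 → ℝ) ((0 : E4), (1:ℝ))).continuous).comp_continuousOn hfd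
  refine this.congr fun q hq => ?_
  obtain ⟨x, t⟩ := q
  exact ns_deriv_eq hu hq.2 j
end


private lemma ns_uniqueDiffOn : UniqueDiffOn ℝ ((univ : Set E4) ×ˢ Ici (0:ℝ)) :=
  uniqueDiffOn_univ.prod (uniqueDiffOn_Ici 0)

section
variable {u : E4 → ℝ → E4}
  (hu : ContDiffOn ℝ (⊤ : ℕ∞) (fun q : E4 × ℝ => u q.1 q.2) (univ ×ˢ Ici 0))

include hu in
/-- the spatial derivative equals evaluation of the within-Fréchet-derivative on the product. -/
private lemma ns_spatial_eq {x : E4} {t : ℝ} (ht : 0 ≤ t) (j : Fin 4) (v : E4) :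
    fderiv ℝ (fun y => u y t j) x v
      = fderivWithin ℝ (fun q : E4 × ℝ => u q.1 q.2) (univ ×ˢ Ici 0) (x, t) (v, (0:ℝ)) j := by
  have hmem : (x, t) ∈ (univ : Set E4) ×ˢ Ici (0:ℝ) := ⟨mem_univ _, ht⟩
  have hF : HasFDerivWithinAt (fun q : E4 × ℝ => u q.1 q.2)
      (fderivWithin ℝ (fun q : E4 × ℝ => u q.1 q.2) (univ ×ˢ Ici 0) (x, t))
      (univ ×ˢ Ici 0) (x, t) :=
    ((hu.differentiableOn (by simp)) (x, t) hmem).hasFDerivWithinAt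
  have hι : HasFDerivAt (fun y : E4 => (y, t))
      ((ContinuousLinearMap.id ℝ E4).prod (0 : E4 →L[ℝ] ℝ)) x :=
    (hasFDerivAt_id x).prodMk (hasFDerivAt_const t x)
  have hmaps : MapsTo (fun y : E4 => (y, t)) univ ((univ : Set E4) ×ˢ Ici (0:ℝ)) :=
    fun y _ => ⟨mem_univ _, ht⟩
  have hcomp : HasFDerivAt (fun y : E4 => u y t)
      ((fderivWithin ℝ (fun q : E4 × ℝ => u q.1 q.2) (univ ×ˢ Ici 0) (x, t)).comp
        ((ContinuousLinearMap.id ℝ E4).prod (0 : E4 →L[ℝ] ℝ))) x := by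
    have := hF.comp x (hι.hasFDerivWithinAt (s := univ)) hmaps
    rwa [hasFDerivWithinAt_univ] at this
  have hj : HasFDerivAt (fun y : E4 => u y t j)
      ((ContinuousLinearMap.proj (R := ℝ) (φ := fun _ : Fin 4 => ℝ) j).comp
        ((fderivWithin ℝ (fun q : E4 × ℝ => u q.1 q.2) (univ ×ˢ Ici 0) (x, t)).comp
          ((ContinuousLinearMap.id ℝ E4).prod (0 : E4 →L[ℝ] ℝ)))) x :=
    (ContinuousLinearMap.proj (R := ℝ) (φ := fun _ : Fin 4 => ℝ) j).hasFDerivAt.comp x hcomp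
  rw [hj.fderiv]
  rfl

include hu in
private lemma ns_spatial_continuousOn (j : Fin 4) (v : E4) :
    ContinuousOn (fun q : E4 × ℝ => fderiv ℝ (fun y => u y q.2 j) q.1 v)
      ((univ : Set E4) ×ˢ Ici (0:ℝ)) := by
  have hfd : ContinuousOn (fderivWithin ℝ (fun q : E4 × ℝ => u q.1 q.2) (univ ×ˢ Ici 0))
      ((univ : Set E4) ×ˢ Ici (0:ℝ)) :=
    hu.continuousOn_fderivWithin ns_uniqueDiffOn (by simp)
  have : ContinuousOn
      (fun q : E4 × ℝ =>
        fderivWithin ℝ (fun q : E4 × ℝ => u q.1 q.2) (univ ×ˢ Ici 0) q (v, (0:ℝ)) j)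
      ((univ : Set E4) ×ˢ Ici (0:ℝ)) :=
    ((continuous_apply j).comp
      (ContinuousLinearMap.apply ℝ (Fin 4 → ℝ) ((v : E4), (0:ℝ))).continuous).comp_continuousOn hfd
  refine this.congr fun q hq => ?_
  obtain ⟨x, t⟩ := q
  exact ns_spatial_eq hu hq.2 j v
end

private lemma ns_zero_off {K : Set E4} {u : E4 → ℝ → E4}
    (hsupp : ∀ t : ℝ, 0 ≤ t → tsupport (fun x => u x t) ⊆ K)
    {x : E4} (hx : x ∉ K) {t : ℝ} (ht : 0 ≤ t) : u x t = 0 := by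
  have : x ∉ tsupport (fun x => u x t) := fun h => hx (hsupp t ht h)
  exact image_eq_zero_of_notMem_tsupport (f := fun x => u x t) this


private def nsRho (u₁ u₂ : E4 → ℝ → E4) (t : ℝ) (x : E4) : ℝ :=
  ∑ j, (u₁ x t j - u₂ x t j)^2

private noncomputable def nsEng (u₁ u₂ : E4 → ℝ → E4) (t : ℝ) : ℝ :=
  ∫ x, nsRho u₁ u₂ t x

private noncomputable def nsDval (u₁ u₂ : E4 → ℝ → E4) (t : ℝ) (x : E4) : ℝ :=
  ∑ j, 2 * (u₁ x t j - u₂ x t j)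
    * (deriv (fun s => u₁ x s j) t - deriv (fun s => u₂ x s j) t)

private lemma ns_integrable {K : Set E4} (hK : IsCompact K) {f : E4 → ℝ}
    (hf : Continuous f) (hs : support f ⊆ K) : Integrable f volume :=
  hf.integrable_of_hasCompactSupport
    (hK.of_isClosed_subset isClosed_closure (closure_minimal hs hK.isClosed))

section
variable {K : Set E4} (hK : IsCompact K) {u₁ u₂ : E4 → ℝ → E4}
  (hu₁ : ContDiffOn ℝ (⊤ : ℕ∞) (fun q : E4 × ℝ => u₁ q.1 q.2) (univ ×ˢ Ici 0))
  (hu₂ : ContDiffOn ℝ (⊤ : ℕ∞) (fun q : E4 × ℝ => u₂ q.1 q.2) (univ ×ˢ Ici 0))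
  (hsupp₁ : ∀ t : ℝ, 0 ≤ t → tsupport (fun x => u₁ x t) ⊆ K)
  (hsupp₂ : ∀ t : ℝ, 0 ≤ t → tsupport (fun x => u₂ x t) ⊆ K)

include hsupp₁ hsupp₂ in
private lemma ns_rho_supp {t : ℝ} (ht : 0 ≤ t) : support (nsRho u₁ u₂ t) ⊆ K := by
  intro x hx
  by_contra hxK
  apply hx
  have h1 : u₁ x t = 0 := by
    have : x ∉ tsupport (fun x => u₁ x t) := fun h => hxK (hsupp₁ t ht h)
    exact image_eq_zero_of_notMem_tsupport (f := fun x => u₁ x t) this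
  have h2 : u₂ x t = 0 := by
    have : x ∉ tsupport (fun x => u₂ x t) := fun h => hxK (hsupp₂ t ht h)
    exact image_eq_zero_of_notMem_tsupport (f := fun x => u₂ x t) this
  simp [nsRho, h1, h2]

include hu₁ hu₂ in
private lemma ns_rho_contOn :
    ContinuousOn (fun q : E4 × ℝ => nsRho u₁ u₂ q.2 q.1) ((univ : Set E4) ×ˢ Ici (0:ℝ)) := by
  have h1 := hu₁.continuousOn
  have h2 := hu₂.continuousOn
  simp only [nsRho]
  apply continuousOn_finset_sum
  intro j _
  exact (((continuous_apply j).comp_continuousOn h1).sub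
    ((continuous_apply j).comp_continuousOn h2)).pow 2

include hu₁ hu₂ in
private lemma ns_rho_cont {t : ℝ} (ht : 0 ≤ t) : Continuous (nsRho u₁ u₂ t) := by
  unfold nsRho
  apply continuous_finset_sum
  intro j _
  exact (((ns_slice_contDiff_comp hu₁ ht j).continuous).sub
    ((ns_slice_contDiff_comp hu₂ ht j).continuous)).pow 2

include hK hu₁ hu₂ hsupp₁ hsupp₂ in
private lemma ns_rho_int {t : ℝ} (ht : 0 ≤ t) : Integrable (nsRho u₁ u₂ t) volume :=
  ns_integrable hK (ns_rho_cont hu₁ hu₂ ht) (ns_rho_supp hsupp₁ hsupp₂ ht)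

private lemma ns_rho_nonneg (t : ℝ) (x : E4) : 0 ≤ nsRho u₁ u₂ t x :=
  Finset.sum_nonneg fun j _ => sq_nonneg _

private lemma ns_eng_nonneg (t : ℝ) : 0 ≤ nsEng u₁ u₂ t :=
  integral_nonneg (ns_rho_nonneg t)

end
private lemma ns_indicator_int {K : Set E4} (hK : IsCompact K) (C : ℝ) :
    Integrable (K.indicator fun _ => C) volume :=
  (integrableOn_const hK.measure_lt_top.ne).integrable_indicator hK.measurableSet

section
variable {K : Set E4} (hK : IsCompact K) {u₁ u₂ : E4 → ℝ → E4}
  (hu₁ : ContDiffOn ℝ (⊤ : ℕ∞) (fun q : E4 × ℝ => u₁ q.1 q.2) (univ ×ˢ Ici 0))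
  (hu₂ : ContDiffOn ℝ (⊤ : ℕ∞) (fun q : E4 × ℝ => u₂ q.1 q.2) (univ ×ˢ Ici 0))
  (hsupp₁ : ∀ t : ℝ, 0 ≤ t → tsupport (fun x => u₁ x t) ⊆ K)
  (hsupp₂ : ∀ t : ℝ, 0 ≤ t → tsupport (fun x => u₂ x t) ⊆ K)

include hK hu₁ hu₂ hsupp₁ hsupp₂ in
private lemma ns_eng_contOn {T : ℝ} (hT : 0 < T) :
    ContinuousOn (nsEng u₁ u₂) (Icc 0 T) := by
  have hsub : (K ×ˢ Icc (0:ℝ) T) ⊆ (univ : Set E4) ×ˢ Ici (0:ℝ) :=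
    prod_mono (subset_univ K) (Icc_subset_Ici_self)
  obtain ⟨C, hC⟩ := (hK.prod isCompact_Icc).exists_bound_of_continuousOn
    ((ns_rho_contOn hu₁ hu₂).mono hsub)
  unfold nsEng
  apply continuousOn_of_dominated (bound := K.indicator fun _ => C)
  · exact fun t htT => (ns_rho_cont hu₁ hu₂ htT.1).aestronglyMeasurable
  · intro t htT
    filter_upwards with x
    by_cases hx : x ∈ K
    · have := hC (x, t) ⟨hx, htT⟩
      simpa [Set.indicator_of_mem hx] using this
    · have : nsRho u₁ u₂ t x = 0 := by
        by_contra h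
        exact hx (ns_rho_supp hsupp₁ hsupp₂ htT.1 h)
      simp [Set.indicator_of_notMem hx, this]
  · exact ns_indicator_int hK C
  · filter_upwards with x
    intro t htT
    exact ((ns_rho_contOn hu₁ hu₂).comp
      ((Continuous.prodMk continuous_const continuous_id).continuousOn)
      (fun s hs => ⟨mem_univ _, (le_trans (le_refl _) (Icc_subset_Ici_self hs : (0:ℝ) ≤ s) : (0:ℝ) ≤ s)⟩))
      t htT

include hu₁ hu₂ in
private lemma ns_Dval_contOn :
    ContinuousOn (fun q : E4 × ℝ => nsDval u₁ u₂ q.2 q.1)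
      ((univ : Set E4) ×ˢ Ioi (0:ℝ)) := by
  unfold nsDval
  apply continuousOn_finset_sum
  intro j _
  have h1 : ContinuousOn (fun q : E4 × ℝ => u₁ q.1 q.2 j - u₂ q.1 q.2 j)
      ((univ : Set E4) ×ˢ Ioi (0:ℝ)) :=
    (((continuous_apply j).comp_continuousOn
        (hu₁.continuousOn.mono (prod_mono_right Ioi_subset_Ici_self))).sub
      ((continuous_apply j).comp_continuousOn
        (hu₂.continuousOn.mono (prod_mono_right Ioi_subset_Ici_self))))
  have h2 : ContinuousOn
      (fun q : E4 × ℝ => deriv (fun s => u₁ q.1 s j) q.2 - deriv (fun s => u₂ q.1 s j) q.2)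
      ((univ : Set E4) ×ˢ Ioi (0:ℝ)) :=
    (ns_timeDeriv_continuousOn hu₁ j).sub (ns_timeDeriv_continuousOn hu₂ j)
  exact (continuousOn_const.mul h1).mul h2

include hK hu₁ hu₂ hsupp₁ hsupp₂ in
private lemma ns_eng_hasDeriv {t : ℝ} (ht : 0 < t) :
    HasDerivAt (nsEng u₁ u₂) (∫ x, nsDval u₁ u₂ t x) t := by
  have hball : Metric.ball t (t/2) ⊆ Ioi (0:ℝ) := by
    intro s hs
    have := abs_lt.mp (by simpa [Real.dist_eq] using hs)
    simp only [mem_Ioi]; linarith [this.1]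
  have hballIcc : Metric.ball t (t/2) ⊆ Icc (t/2) (3*t/2) := by
    intro s hs
    have := abs_lt.mp (by simpa [Real.dist_eq] using hs)
    constructor <;> [linarith [this.1]; linarith [this.2]]
  have hsub : (K ×ˢ Icc (t/2) (3*t/2)) ⊆ (univ : Set E4) ×ˢ Ioi (0:ℝ) :=
    prod_mono (subset_univ K) (fun s hs => lt_of_lt_of_le (by linarith) hs.1)
  obtain ⟨C, hC⟩ := (hK.prod isCompact_Icc).exists_bound_of_continuousOn
    ((ns_Dval_contOn hu₁ hu₂).mono hsub)
  have key := hasDerivAt_integral_of_dominated_loc_of_deriv_le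
    (F := fun s x => nsRho u₁ u₂ s x) (F' := fun s x => nsDval u₁ u₂ s x)
    (x₀ := t) (s := Metric.ball t (t/2)) (bound := K.indicator fun _ => C)
    (μ := (volume : Measure E4)) (Metric.ball_mem_nhds t (half_pos ht))
    ?meas ?int ?meas' ?bdd ?bint ?diff
  · exact key.2
  case meas =>
    filter_upwards [Metric.ball_mem_nhds t (half_pos ht)] with s hs
    exact (ns_rho_cont hu₁ hu₂ (le_of_lt (hball hs))).aestronglyMeasurable
  case int => exact ns_rho_int hK hu₁ hu₂ hsupp₁ hsupp₂ ht.le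
  case meas' =>
    have : Continuous (fun x => nsDval u₁ u₂ t x) := by
      have hmaps : MapsTo (fun x : E4 => (x, t)) univ ((univ : Set E4) ×ˢ Ioi 0) :=
        fun y _ => ⟨mem_univ _, mem_Ioi.mpr ht⟩
      have hcomp := (ns_Dval_contOn hu₁ hu₂).comp
        ((continuous_id.prodMk continuous_const).continuousOn) hmaps
      rw [← continuousOn_univ]
      exact hcomp
    exact this.aestronglyMeasurable
  case bdd =>
    filter_upwards with x
    intro s hs
    by_cases hx : x ∈ K
    · have := hC (x, s) ⟨hx, hballIcc hs⟩
      simpa [Set.indicator_of_mem hx] using this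
    · have hz : nsDval u₁ u₂ s x = 0 := by
        have hs0 : (0:ℝ) ≤ s := (hball hs).le
        have h1 : u₁ x s = 0 := ns_zero_off hsupp₁ hx hs0
        have h2 : u₂ x s = 0 := ns_zero_off hsupp₂ hx hs0
        unfold nsDval
        apply Finset.sum_eq_zero
        intro j _
        simp [h1, h2]
      simp [Set.indicator_of_notMem hx, hz]
  case bint => exact ns_indicator_int hK C
  case diff =>
    filter_upwards with x
    intro s hs
    have hs0 : (0:ℝ) < s := hball hs
    unfold nsRho nsDval
    apply HasDerivAt.fun_sum
    intro j _
    have hd : HasDerivAt (fun τ => u₁ x τ j - u₂ x τ j)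
        (deriv (fun τ => u₁ x τ j) s - deriv (fun τ => u₂ x τ j) s) s :=
      (ns_hasDerivAt_time hu₁ hs0 j).sub (ns_hasDerivAt_time hu₂ hs0 j)
    have := hd.fun_pow 2
    refine this.congr_deriv ?_
    push_cast
    ring
end
private noncomputable def nsD (u : E4 → ℝ → E4) (t : ℝ) (i j : Fin 4) (x : E4) : ℝ :=
  fderiv ℝ (fun y => u y t j) x (Pi.single i 1)

section
variable {K : Set E4} (hK : IsCompact K) {u₁ u₂ : E4 → ℝ → E4}
  (hu₁ : ContDiffOn ℝ (⊤ : ℕ∞) (fun q : E4 × ℝ => u₁ q.1 q.2) (univ ×ˢ Ici 0))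
  (hu₂ : ContDiffOn ℝ (⊤ : ℕ∞) (fun q : E4 × ℝ => u₂ q.1 q.2) (univ ×ˢ Ici 0))
  (hsupp₁ : ∀ t : ℝ, 0 ≤ t → tsupport (fun x => u₁ x t) ⊆ K)
  (hsupp₂ : ∀ t : ℝ, 0 ≤ t → tsupport (fun x => u₂ x t) ⊆ K)

include hu₁ hu₂ in
private lemma ns_rho_smooth {t : ℝ} (ht : 0 ≤ t) : ContDiff ℝ (⊤ : ℕ∞) (nsRho u₁ u₂ t) := by
  unfold nsRho
  apply ContDiff.sum
  intro j _
  exact ((ns_slice_contDiff_comp hu₁ ht j).sub (ns_slice_contDiff_comp hu₂ ht j)).pow 2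

/-- vanishing of spatial derivatives off the support -/
private lemma ns_fderiv_zero_off (hK : IsCompact K) {u : E4 → ℝ → E4}
    (hsupp : ∀ t : ℝ, 0 ≤ t → tsupport (fun x => u x t) ⊆ K)
    {x : E4} (hx : x ∉ K) {t : ℝ} (ht : 0 ≤ t) (j : Fin 4) (v : E4) :
    fderiv ℝ (fun y => u y t j) x v = 0 := by
  have hsub : support (fun y => u y t j) ⊆ tsupport (fun y => u y t) := by
    intro y hy
    apply subset_closure
    intro h0
    exact hy (by simp [show u y t = 0 from h0])
  have hts : tsupport (fun y => u y t j) ⊆ K :=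
    closure_minimal (hsub.trans (hsupp t ht)) hK.isClosed
  by_contra h0
  exact hx (hts (ns_support_fderiv v (by simpa [Function.mem_support] using h0)))

include hu₁ hu₂ in
/-- spatial derivative of the energy density -/
private lemma ns_rho_fderiv {t : ℝ} (ht : 0 ≤ t) (x : E4) (v : E4) :
    fderiv ℝ (nsRho u₁ u₂ t) x v
      = ∑ j, 2 * (u₁ x t j - u₂ x t j)
          * (fderiv ℝ (fun y => u₁ y t j - u₂ y t j) x v) := by
  have hdc : ∀ j : Fin 4, HasFDerivAt (fun y => u₁ y t j - u₂ y t j)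
      (fderiv ℝ (fun y => u₁ y t j - u₂ y t j) x) x :=
    fun j => (((ns_slice_contDiff_comp hu₁ ht j).sub
      (ns_slice_contDiff_comp hu₂ ht j)).differentiable (by simp) x).hasFDerivAt
  have hsq : ∀ j : Fin 4, HasFDerivAt (fun y => (u₁ y t j - u₂ y t j)^2)
      ((2 * (u₁ x t j - u₂ x t j)) • fderiv ℝ (fun y => u₁ y t j - u₂ y t j) x) x := by
    intro j
    have hmul := (hdc j).mul (hdc j)
    have hfun : (fun y => (u₁ y t j - u₂ y t j)^2)
        = (fun y => (u₁ y t j - u₂ y t j) * (u₁ y t j - u₂ y t j)) :=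
      funext fun y => pow_two _
    have hder : (2 * (u₁ x t j - u₂ x t j)) • fderiv ℝ (fun y => u₁ y t j - u₂ y t j) x
        = (u₁ x t j - u₂ x t j) • fderiv ℝ (fun y => u₁ y t j - u₂ y t j) x
          + (u₁ x t j - u₂ x t j) • fderiv ℝ (fun y => u₁ y t j - u₂ y t j) x := by
      rw [two_mul, add_smul]
    rw [hfun, hder]
    exact hmul
  have hsum : HasFDerivAt (nsRho u₁ u₂ t)
      (∑ j, (2 * (u₁ x t j - u₂ x t j)) • fderiv ℝ (fun y => u₁ y t j - u₂ y t j) x) x := by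
    unfold nsRho
    exact HasFDerivAt.fun_sum (fun j _ => hsq j)
  rw [hsum.fderiv, ContinuousLinearMap.sum_apply]
  refine Finset.sum_congr rfl fun j _ => ?_
  simp [smul_eq_mul, mul_assoc]
end
private noncomputable def nsDD (u : E4 → ℝ → E4) (t : ℝ) (i j : Fin 4) (x : E4) : ℝ :=
  fderiv ℝ (fun y => fderiv ℝ (fun z => u z t j) y (Pi.single i 1)) x (Pi.single i 1)

private noncomputable def nsS1 (u₁ u₂ : E4 → ℝ → E4) (t : ℝ) (x : E4) : ℝ :=
  ∑ j, ∑ i, (u₁ x t j - u₂ x t j) * ((u₁ x t i - u₂ x t i) * nsD u₁ t i j x)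

private noncomputable def nsS2 (u₁ u₂ : E4 → ℝ → E4) (t : ℝ) (x : E4) : ℝ :=
  ∑ j, ∑ i, (u₁ x t j - u₂ x t j) * (u₂ x t i * (nsD u₁ t i j x - nsD u₂ t i j x))

private noncomputable def nsS3 (u₁ u₂ : E4 → ℝ → E4) (t : ℝ) (x : E4) : ℝ :=
  ∑ j, ∑ i, (u₁ x t j - u₂ x t j) * (nsDD u₁ t i j x - nsDD u₂ t i j x)

private noncomputable def nsS4 (u₁ u₂ : E4 → ℝ → E4) (p₁ p₂ : E4 → ℝ → ℝ) (t : ℝ) (x : E4) : ℝ :=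
  ∑ j, (u₁ x t j - u₂ x t j) * (fderiv ℝ (fun y => p₁ y t) x (Pi.single j 1)
    - fderiv ℝ (fun y => p₂ y t) x (Pi.single j 1))
section
variable {K Ω : Set E4} {u₁ u₂ : E4 → ℝ → E4} {p₁ p₂ : E4 → ℝ → ℝ} {ν : ℝ}

private lemma ns_key (hK : IsCompact K) (hKΩ : K ⊆ Ω)
    (hu₁ : ContDiffOn ℝ (⊤ : ℕ∞) (fun q : E4 × ℝ => u₁ q.1 q.2) (univ ×ˢ Ici 0))
    (hu₂ : ContDiffOn ℝ (⊤ : ℕ∞) (fun q : E4 × ℝ => u₂ q.1 q.2) (univ ×ˢ Ici 0))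
    (hp₁ : ContDiffOn ℝ (⊤ : ℕ∞) (fun q : E4 × ℝ => p₁ q.1 q.2) (univ ×ˢ Ici 0))
    (hp₂ : ContDiffOn ℝ (⊤ : ℕ∞) (fun q : E4 × ℝ => p₂ q.1 q.2) (univ ×ˢ Ici 0))
    (hsupp₁ : ∀ t : ℝ, 0 ≤ t → tsupport (fun x => u₁ x t) ⊆ K)
    (hsupp₂ : ∀ t : ℝ, 0 ≤ t → tsupport (fun x => u₂ x t) ⊆ K)
    (hdiv₁ : ∀ x ∈ Ω, ∀ t : ℝ, 0 ≤ t →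
      ∑ i : Fin 4, fderiv ℝ (fun y => u₁ y t i) x (Pi.single i 1) = 0)
    (hdiv₂ : ∀ x ∈ Ω, ∀ t : ℝ, 0 ≤ t →
      ∑ i : Fin 4, fderiv ℝ (fun y => u₂ y t i) x (Pi.single i 1) = 0)
    (hNS₁ : ∀ x ∈ Ω, ∀ t : ℝ, 0 < t → ∀ j : Fin 4,
      deriv (fun s => u₁ x s j) t
        + ∑ i : Fin 4, u₁ x t i * fderiv ℝ (fun y => u₁ y t j) x (Pi.single i 1)
        - ν * ∑ i : Fin 4,
            fderiv ℝ (fun y => fderiv ℝ (fun z => u₁ z t j) y (Pi.single i 1)) x (Pi.single i 1)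
        + fderiv ℝ (fun y => p₁ y t) x (Pi.single j 1) = 0)
    (hNS₂ : ∀ x ∈ Ω, ∀ t : ℝ, 0 < t → ∀ j : Fin 4,
      deriv (fun s => u₂ x s j) t
        + ∑ i : Fin 4, u₂ x t i * fderiv ℝ (fun y => u₂ y t j) x (Pi.single i 1)
        - ν * ∑ i : Fin 4,
            fderiv ℝ (fun y => fderiv ℝ (fun z => u₂ z t j) y (Pi.single i 1)) x (Pi.single i 1)
        + fderiv ℝ (fun y => p₂ y t) x (Pi.single j 1) = 0)
    (hν : 0 ≤ ν) {t M : ℝ} (ht : 0 < t) (hM0 : 0 ≤ M)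
    (hM : ∀ x ∈ K, ∀ i j : Fin 4, |nsD u₁ t i j x| ≤ M) :
    ∫ x, nsDval u₁ u₂ t x ≤ 8 * M * nsEng u₁ u₂ t := by
  have ht' : (0:ℝ) ≤ t := ht.le
  have hA : ∀ j, ContDiff ℝ (⊤ : ℕ∞) (fun y => u₁ y t j) := fun j => ns_slice_contDiff_comp hu₁ ht' j
  have hB : ∀ j, ContDiff ℝ (⊤ : ℕ∞) (fun y => u₂ y t j) := fun j => ns_slice_contDiff_comp hu₂ ht' j
  have hC : ∀ j, ContDiff ℝ (⊤ : ℕ∞) (fun y => u₁ y t j - u₂ y t j) := fun j => (hA j).sub (hB j)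
  have hP1 : ContDiff ℝ (⊤ : ℕ∞) (fun y => p₁ y t) := ns_slice_contDiff hp₁ ht'
  have hP2 : ContDiff ℝ (⊤ : ℕ∞) (fun y => p₂ y t) := ns_slice_contDiff hp₂ ht'
  have hc0 : ∀ x ∉ K, ∀ j : Fin 4, u₁ x t j - u₂ x t j = 0 := by
    intro x hx j
    rw [congrFun (ns_zero_off hsupp₁ hx ht') j, congrFun (ns_zero_off hsupp₂ hx ht') j]
    simp
  have hBsupp : ∀ i : Fin 4, tsupport (fun y => u₂ y t i) ⊆ K := by
    intro i
    apply closure_minimal _ hK.isClosed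
    intro y hy
    by_contra hyK
    exact hy (by simp [congrFun (ns_zero_off hsupp₂ hyK ht') i])
  have hCsupp : ∀ j : Fin 4, tsupport (fun y => u₁ y t j - u₂ y t j) ⊆ K := by
    intro j
    apply closure_minimal _ hK.isClosed
    intro y hy
    by_contra hyK
    exact hy (hc0 y hyK j)
  have hCsupp' : ∀ j : Fin 4, support (fun y => u₁ y t j - u₂ y t j) ⊆ K :=
    fun j => subset_trans subset_closure (hCsupp j)
  -- spatial derivative of the difference
  have hcd : ∀ (i j : Fin 4) (x : E4),
      fderiv ℝ (fun y => u₁ y t j - u₂ y t j) x (Pi.single i 1)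
        = nsD u₁ t i j x - nsD u₂ t i j x := by
    intro i j x
    rw [fderiv_fun_sub ((hA j).differentiable (by simp) x) ((hB j).differentiable (by simp) x)]
    rfl
  -- divergence facts
  have hdivB : ∀ x : E4, ∑ i : Fin 4, fderiv ℝ (fun y => u₂ y t i) x (Pi.single i 1) = 0 := by
    intro x
    by_cases hx : x ∈ Ω
    · exact hdiv₂ x hx t ht'
    · have hxK : x ∉ K := fun h => hx (hKΩ h)
      exact Finset.sum_eq_zero fun i _ => ns_fderiv_zero_off hK hsupp₂ hxK ht' i _
  have hdivC : ∀ x : E4,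
      ∑ j : Fin 4, fderiv ℝ (fun y => u₁ y t j - u₂ y t j) x (Pi.single j 1) = 0 := by
    intro x
    have : ∀ j : Fin 4, fderiv ℝ (fun y => u₁ y t j - u₂ y t j) x (Pi.single j 1)
        = fderiv ℝ (fun y => u₁ y t j) x (Pi.single j 1)
          - fderiv ℝ (fun y => u₂ y t j) x (Pi.single j 1) := fun j => hcd j j x
    rw [Finset.sum_congr rfl fun j _ => this j, Finset.sum_sub_distrib]
    by_cases hx : x ∈ Ω
    · rw [hdiv₁ x hx t ht', hdiv₂ x hx t ht', sub_zero]
    · have hxK : x ∉ K := fun h => hx (hKΩ h)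
      rw [Finset.sum_eq_zero fun i _ => ns_fderiv_zero_off hK hsupp₁ hxK ht' i _,
        Finset.sum_eq_zero fun i _ => ns_fderiv_zero_off hK hsupp₂ hxK ht' i _, sub_zero]
  -- the master pointwise identity
  have master : ∀ x : E4, nsDval u₁ u₂ t x =
      -2 * nsS1 u₁ u₂ t x + (-2) * nsS2 u₁ u₂ t x + (2*ν) * nsS3 u₁ u₂ t x
        + (-2) * nsS4 u₁ u₂ p₁ p₂ t x := by
    intro x
    unfold nsS1 nsS2 nsS3 nsS4
    by_cases hx : x ∈ Ω
    · have hTd : ∀ j : Fin 4,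
          deriv (fun s => u₁ x s j) t - deriv (fun s => u₂ x s j) t
          = -(∑ i : Fin 4, (u₁ x t i * nsD u₁ t i j x - u₂ x t i * nsD u₂ t i j x))
            + ν * ((∑ i : Fin 4, nsDD u₁ t i j x) - (∑ i : Fin 4, nsDD u₂ t i j x))
            - (fderiv ℝ (fun y => p₁ y t) x (Pi.single j 1)
              - fderiv ℝ (fun y => p₂ y t) x (Pi.single j 1)) := by
        intro j
        have h1 := hNS₁ x hx t ht j
        have h2 := hNS₂ x hx t ht j
        simp only [nsD, nsDD, Finset.sum_sub_distrib]
        linear_combination h1 - h2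
      unfold nsDval
      rw [Fin.sum_univ_four]
      rw [hTd 0, hTd 1, hTd 2, hTd 3]
      simp only [nsD, nsDD, Fin.sum_univ_four]
      ring
    · have hxK : x ∉ K := fun h => hx (hKΩ h)
      have hc : ∀ j : Fin 4, u₁ x t j - u₂ x t j = 0 := hc0 x hxK
      unfold nsDval
      simp [Fin.sum_univ_four, hc]
  -- continuity of derivative terms
  have hDcont : ∀ i j : Fin 4, Continuous (nsD u₁ t i j) := by
    intro i j; unfold nsD; exact (ns_fderiv_app_contDiff (hA j) _).continuous
  have hDcont₂ : ∀ i j : Fin 4, Continuous (nsD u₂ t i j) := by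
    intro i j; unfold nsD; exact (ns_fderiv_app_contDiff (hB j) _).continuous
  have hDDcont : ∀ i j : Fin 4, Continuous (nsDD u₁ t i j) := by
    intro i j; unfold nsDD
    exact (ns_fderiv_app_contDiff (ns_fderiv_app_contDiff (hA j) _) _).continuous
  have hDDcont₂ : ∀ i j : Fin 4, Continuous (nsDD u₂ t i j) := by
    intro i j; unfold nsDD
    exact (ns_fderiv_app_contDiff (ns_fderiv_app_contDiff (hB j) _) _).continuous
  have hCcont : ∀ j : Fin 4, Continuous (fun y => u₁ y t j - u₂ y t j) :=
    fun j => (hC j).continuous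
  have hIntC : ∀ (j : Fin 4) (g : E4 → ℝ), Continuous g →
      Integrable (fun x => (u₁ x t j - u₂ x t j) * g x) volume :=
    fun j g hg => ns_integrable hK ((hCcont j).mul hg)
      ((support_mul_subset_left _ _).trans (hCsupp' j))
  have hS1int : Integrable (nsS1 u₁ u₂ t) volume := by
    unfold nsS1
    refine integrable_finset_sum _ fun j _ => integrable_finset_sum _ fun i _ => ?_
    exact hIntC j _ (((hC i).continuous).mul (hDcont i j))
  have hS2int : Integrable (nsS2 u₁ u₂ t) volume := by
    unfold nsS2
    refine integrable_finset_sum _ fun j _ => integrable_finset_sum _ fun i _ => ?_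
    exact hIntC j _ ((hB i).continuous.mul ((hDcont i j).sub (hDcont₂ i j)))
  have hS3int : Integrable (nsS3 u₁ u₂ t) volume := by
    unfold nsS3
    refine integrable_finset_sum _ fun j _ => integrable_finset_sum _ fun i _ => ?_
    exact hIntC j _ ((hDDcont i j).sub (hDDcont₂ i j))
  have hS4int : Integrable (nsS4 u₁ u₂ p₁ p₂ t) volume := by
    unfold nsS4
    refine integrable_finset_sum _ fun j _ => ?_
    exact hIntC j _ ((ns_fderiv_app_contDiff hP1 _).continuous.sub
      (ns_fderiv_app_contDiff hP2 _).continuous)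
  -- rho facts
  have hrhoc : ContDiff ℝ (⊤ : ℕ∞) (nsRho u₁ u₂ t) := ns_rho_smooth hu₁ hu₂ ht'
  have hrhots : tsupport (nsRho u₁ u₂ t) ⊆ K :=
    closure_minimal (ns_rho_supp hsupp₁ hsupp₂ ht') hK.isClosed
  -- ∫ S2 = 0
  have hS2zero : (∫ x, nsS2 u₁ u₂ t x) = 0 := by
    have hpt : ∀ x : E4, nsS2 u₁ u₂ t x
        = ∑ i : Fin 4, (1/2) * (u₂ x t i * fderiv ℝ (nsRho u₁ u₂ t) x (Pi.single i 1)) := by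
      intro x
      unfold nsS2
      rw [Finset.sum_comm]
      refine Finset.sum_congr rfl fun i _ => ?_
      have hfd : fderiv ℝ (nsRho u₁ u₂ t) x (Pi.single i 1)
          = ∑ j : Fin 4, 2 * (u₁ x t j - u₂ x t j) * (nsD u₁ t i j x - nsD u₂ t i j x) := by
        rw [ns_rho_fderiv hu₁ hu₂ ht' x (Pi.single i 1)]
        exact Finset.sum_congr rfl fun j _ => by rw [hcd i j x]
      rw [hfd, Finset.mul_sum, Finset.mul_sum]
      refine Finset.sum_congr rfl fun j _ => ?_
      ring
    have hint : ∀ i : Fin 4, Integrable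
        (fun x => u₂ x t i * fderiv ℝ (nsRho u₁ u₂ t) x (Pi.single i 1)) volume := by
      intro i
      apply ns_integrable hK ((hB i).continuous.mul
        (ns_fderiv_app_contDiff hrhoc _).continuous)
      exact (support_mul_subset_right _ _).trans ((ns_support_fderiv _).trans hrhots)
    have hint2 : ∀ i : Fin 4, Integrable
        (fun x => fderiv ℝ (fun y => u₂ y t i) x (Pi.single i 1) * nsRho u₁ u₂ t x) volume := by
      intro i
      apply ns_integrable hK ((ns_fderiv_app_contDiff (hB i) _).continuous.mul
        (ns_rho_cont hu₁ hu₂ ht'))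
      exact (support_mul_subset_right _ _).trans (ns_rho_supp hsupp₁ hsupp₂ ht')
    simp only [hpt]
    rw [integral_finset_sum _ (fun i _ => ((hint i).const_mul _))]
    have heach : ∀ i : Fin 4,
        (∫ x, (1/2) * (u₂ x t i * fderiv ℝ (nsRho u₁ u₂ t) x (Pi.single i 1)))
        = (-(1/2)) * ∫ x, fderiv ℝ (fun y => u₂ y t i) x (Pi.single i 1) * nsRho u₁ u₂ t x := by
      intro i
      rw [integral_const_mul, ns_ibp hK (hB i) hrhoc (hBsupp i) (Pi.single i 1)]
      ring
    rw [Finset.sum_congr rfl fun i _ => heach i, ← Finset.mul_sum,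
      ← integral_finset_sum _ (fun i _ => hint2 i)]
    have hz : ∀ x : E4, (∑ i : Fin 4,
        fderiv ℝ (fun y => u₂ y t i) x (Pi.single i 1) * nsRho u₁ u₂ t x) = 0 := by
      intro x
      rw [← Finset.sum_mul, hdivB x, zero_mul]
    simp only [hz, integral_zero, neg_zero, mul_zero]
  -- ∫ S4 = 0
  have hQ : ContDiff ℝ (⊤ : ℕ∞) (fun y => p₁ y t - p₂ y t) := hP1.sub hP2
  have hq : ∀ (j : Fin 4) (x : E4),
      fderiv ℝ (fun y => p₁ y t) x (Pi.single j 1) - fderiv ℝ (fun y => p₂ y t) x (Pi.single j 1)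
        = fderiv ℝ (fun y => p₁ y t - p₂ y t) x (Pi.single j 1) := by
    intro j x
    rw [fderiv_fun_sub (hP1.differentiable (by simp) x) (hP2.differentiable (by simp) x)]
    rfl
  have hS4zero : (∫ x, nsS4 u₁ u₂ p₁ p₂ t x) = 0 := by
    have hint : ∀ j : Fin 4, Integrable (fun x =>
        (u₁ x t j - u₂ x t j) * fderiv ℝ (fun y => p₁ y t - p₂ y t) x (Pi.single j 1)) volume :=
      fun j => hIntC j _ (ns_fderiv_app_contDiff hQ _).continuous
    have hint2 : ∀ j : Fin 4, Integrable (fun x =>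
        fderiv ℝ (fun y => u₁ y t j - u₂ y t j) x (Pi.single j 1) * (p₁ x t - p₂ x t)) volume := by
      intro j
      apply ns_integrable hK ((ns_fderiv_app_contDiff (hC j) _).continuous.mul
        (hP1.continuous.sub hP2.continuous))
      exact (support_mul_subset_left _ _).trans ((ns_support_fderiv _).trans (hCsupp j))
    unfold nsS4
    simp only [hq]
    rw [integral_finset_sum _ (fun j _ => hint j)]
    have heach : ∀ j : Fin 4, (∫ x,
        (u₁ x t j - u₂ x t j) * fderiv ℝ (fun y => p₁ y t - p₂ y t) x (Pi.single j 1))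
        = - ∫ x, fderiv ℝ (fun y => u₁ y t j - u₂ y t j) x (Pi.single j 1) * (p₁ x t - p₂ x t) :=
      fun j => ns_ibp hK (hC j) hQ (hCsupp j) (Pi.single j 1)
    rw [Finset.sum_congr rfl fun j _ => heach j, Finset.sum_neg_distrib,
      ← integral_finset_sum _ (fun j _ => hint2 j)]
    have hz : ∀ x : E4, (∑ j : Fin 4,
        fderiv ℝ (fun y => u₁ y t j - u₂ y t j) x (Pi.single j 1) * (p₁ x t - p₂ x t)) = 0 := by
      intro x
      rw [← Finset.sum_mul, hdivC x, zero_mul]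
    simp only [hz, integral_zero, neg_zero]
  -- ∫ S3 ≤ 0
  have hS3nonpos : (∫ x, nsS3 u₁ u₂ t x) ≤ 0 := by
    have hDDC : ∀ (i j : Fin 4) (x : E4), nsDD u₁ t i j x - nsDD u₂ t i j x
        = fderiv ℝ (fun y => fderiv ℝ (fun z => u₁ z t j - u₂ z t j) y (Pi.single i 1)) x
            (Pi.single i 1) := by
      intro i j x
      have hfe : (fun y => fderiv ℝ (fun z => u₁ z t j - u₂ z t j) y (Pi.single i 1))
          = (fun y => nsD u₁ t i j y - nsD u₂ t i j y) := funext fun y => hcd i j y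
      have hd1 : Differentiable ℝ (nsD u₁ t i j) :=
        (ns_fderiv_app_contDiff (hA j) (Pi.single i 1)).differentiable (by simp)
      have hd2 : Differentiable ℝ (nsD u₂ t i j) :=
        (ns_fderiv_app_contDiff (hB j) (Pi.single i 1)).differentiable (by simp)
      rw [hfe, fderiv_fun_sub (hd1 x) (hd2 x)]
      rfl
    have hint : ∀ i j : Fin 4, Integrable (fun x => (u₁ x t j - u₂ x t j)
        * fderiv ℝ (fun y => fderiv ℝ (fun z => u₁ z t j - u₂ z t j) y (Pi.single i 1)) x
            (Pi.single i 1)) volume :=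
      fun i j => hIntC j _
        (ns_fderiv_app_contDiff (ns_fderiv_app_contDiff (hC j) _) _).continuous
    unfold nsS3
    simp only [hDDC]
    rw [integral_finset_sum _ (fun j _ => integrable_finset_sum _ (fun i _ => hint i j))]
    apply Finset.sum_nonpos
    intro j _
    rw [integral_finset_sum _ (fun i _ => hint i j)]
    apply Finset.sum_nonpos
    intro i _
    rw [ns_ibp hK (hC j) (ns_fderiv_app_contDiff (hC j) (Pi.single i 1)) (hCsupp j)
      (Pi.single i 1)]
    rw [neg_nonpos]
    apply integral_nonneg
    intro x
    exact mul_self_nonneg _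
  -- |S1| ≤ 4 M rho
  have hS1bd : ∀ x : E4, |nsS1 u₁ u₂ t x| ≤ 4 * M * nsRho u₁ u₂ t x := by
    intro x
    by_cases hx : x ∈ K
    · have step1 : |nsS1 u₁ u₂ t x| ≤ ∑ j : Fin 4, ∑ i : Fin 4,
          |u₁ x t j - u₂ x t j| * |u₁ x t i - u₂ x t i| * M := by
        unfold nsS1
        refine (Finset.abs_sum_le_sum_abs _ _).trans ?_
        refine Finset.sum_le_sum fun j _ => ?_
        refine (Finset.abs_sum_le_sum_abs _ _).trans ?_
        refine Finset.sum_le_sum fun i _ => ?_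
        rw [abs_mul, abs_mul, ← mul_assoc]
        exact mul_le_mul_of_nonneg_left (hM x hx i j)
          (mul_nonneg (abs_nonneg _) (abs_nonneg _))
      have step2 : (∑ j : Fin 4, ∑ i : Fin 4,
          |u₁ x t j - u₂ x t j| * |u₁ x t i - u₂ x t i| * M)
          = (∑ j : Fin 4, |u₁ x t j - u₂ x t j|)^2 * M := by
        rw [pow_two, Finset.sum_mul_sum]
        rw [Finset.sum_mul]
        refine Finset.sum_congr rfl fun j _ => ?_
        rw [Finset.sum_mul]
      have step3 : (∑ j : Fin 4, |u₁ x t j - u₂ x t j|)^2 ≤ 4 * nsRho u₁ u₂ t x := by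
        have h := sq_sum_le_card_mul_sum_sq
          (s := (Finset.univ : Finset (Fin 4))) (f := fun j => |u₁ x t j - u₂ x t j|)
        unfold nsRho
        simpa [sq_abs] using h
      calc |nsS1 u₁ u₂ t x|
          ≤ (∑ j : Fin 4, |u₁ x t j - u₂ x t j|)^2 * M := by rw [← step2]; exact step1
        _ ≤ (4 * nsRho u₁ u₂ t x) * M :=
            mul_le_mul_of_nonneg_right step3 hM0
        _ = 4 * M * nsRho u₁ u₂ t x := by ring
    · have h0 : ∀ j : Fin 4, u₁ x t j - u₂ x t j = 0 := hc0 x hx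
      have hρ0 : nsRho u₁ u₂ t x = 0 := by
        unfold nsRho; simp [h0]
      have hs0 : nsS1 u₁ u₂ t x = 0 := by
        unfold nsS1; simp [h0]
      rw [hs0, hρ0]
      simp
  -- conclusion
  have iA : Integrable (fun x => -2 * nsS1 u₁ u₂ t x) volume := hS1int.const_mul _
  have iB : Integrable (fun x => (-2) * nsS2 u₁ u₂ t x) volume := hS2int.const_mul _
  have iC : Integrable (fun x => (2*ν) * nsS3 u₁ u₂ t x) volume := hS3int.const_mul _
  have iD : Integrable (fun x => (-2) * nsS4 u₁ u₂ p₁ p₂ t x) volume := hS4int.const_mul _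
  have hsplit : ∫ x, nsDval u₁ u₂ t x
      = -2 * (∫ x, nsS1 u₁ u₂ t x) + (-2) * (∫ x, nsS2 u₁ u₂ t x)
        + (2*ν) * (∫ x, nsS3 u₁ u₂ t x) + (-2) * (∫ x, nsS4 u₁ u₂ p₁ p₂ t x) := by
    have e1 : (∫ x, (-2 * nsS1 u₁ u₂ t x + (-2) * nsS2 u₁ u₂ t x + (2*ν) * nsS3 u₁ u₂ t x
          + (-2) * nsS4 u₁ u₂ p₁ p₂ t x))
        = (∫ x, (-2 * nsS1 u₁ u₂ t x + (-2) * nsS2 u₁ u₂ t x + (2*ν) * nsS3 u₁ u₂ t x))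
          + ∫ x, (-2) * nsS4 u₁ u₂ p₁ p₂ t x := integral_add ((iA.add iB).add iC) iD
    have e2 : (∫ x, (-2 * nsS1 u₁ u₂ t x + (-2) * nsS2 u₁ u₂ t x + (2*ν) * nsS3 u₁ u₂ t x))
        = (∫ x, (-2 * nsS1 u₁ u₂ t x + (-2) * nsS2 u₁ u₂ t x))
          + ∫ x, (2*ν) * nsS3 u₁ u₂ t x := integral_add (iA.add iB) iC
    have e3 : (∫ x, (-2 * nsS1 u₁ u₂ t x + (-2) * nsS2 u₁ u₂ t x))
        = (∫ x, -2 * nsS1 u₁ u₂ t x) + ∫ x, (-2) * nsS2 u₁ u₂ t x := integral_add iA iB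
    have e4 : (∫ x, -2 * nsS1 u₁ u₂ t x) = -2 * ∫ x, nsS1 u₁ u₂ t x := integral_const_mul _ _
    have e5 : (∫ x, (-2) * nsS2 u₁ u₂ t x) = (-2) * ∫ x, nsS2 u₁ u₂ t x := integral_const_mul _ _
    have e6 : (∫ x, (2*ν) * nsS3 u₁ u₂ t x) = (2*ν) * ∫ x, nsS3 u₁ u₂ t x := integral_const_mul _ _
    have e7 : (∫ x, (-2) * nsS4 u₁ u₂ p₁ p₂ t x) = (-2) * ∫ x, nsS4 u₁ u₂ p₁ p₂ t x :=
      integral_const_mul _ _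
    simp only [master]
    rw [e1, e2, e3, e4, e5, e6, e7]
  rw [hsplit, hS2zero, hS4zero]
  have h3 : (2*ν) * (∫ x, nsS3 u₁ u₂ t x) ≤ 0 :=
    mul_nonpos_of_nonneg_of_nonpos (by linarith) hS3nonpos
  have habs : |∫ x, nsS1 u₁ u₂ t x| ≤ 4 * M * nsEng u₁ u₂ t := by
    have h1 : |∫ x, nsS1 u₁ u₂ t x| ≤ ∫ x, |nsS1 u₁ u₂ t x| := by
      simpa [Real.norm_eq_abs] using
        norm_integral_le_integral_norm (μ := (volume : Measure E4)) (fun x => nsS1 u₁ u₂ t x)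
    have h2 : (∫ x, |nsS1 u₁ u₂ t x|) ≤ ∫ x, 4 * M * nsRho u₁ u₂ t x :=
      integral_mono hS1int.abs
        ((ns_rho_int hK hu₁ hu₂ hsupp₁ hsupp₂ ht').const_mul _) hS1bd
    have h4 : (∫ x, 4 * M * nsRho u₁ u₂ t x) = 4 * M * nsEng u₁ u₂ t := by
      rw [integral_const_mul]; rfl
    linarith
  have hneg := neg_abs_le (∫ x, nsS1 u₁ u₂ t x)
  linarith
end
set_option maxHeartbeats 1000000 in
/-- **Uniqueness of regular solutions** (Lemma 3.4). If `(u¹, p¹)` and `(u², p²)` are two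
smooth, spatially compactly supported, divergence-free solutions of the 4D Navier–Stokes
equations on `Ω × (0,∞)` with the same initial data, and `ν - 9‖∇u²(·,t)‖_{L²(Ω)} ≥ 0` for
all `t ≥ 0`, then `u¹(·,t) = u²(·,t)` for all `t ≥ 0`. -/
theorem uniqueness_regular_solutions
    (Ω : Set (Fin 4 → ℝ)) (hΩopen : IsOpen Ω)
    (ν : ℝ) (hν : 0 < ν)
    (K : Set (Fin 4 → ℝ)) (hK : IsCompact K) (hKΩ : K ⊆ Ω)
    (u₁ u₂ : (Fin 4 → ℝ) → ℝ → Fin 4 → ℝ) (p₁ p₂ : (Fin 4 → ℝ) → ℝ → ℝ)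
    (hu₁ : ContDiffOn ℝ (⊤ : ℕ∞) (fun q : (Fin 4 → ℝ) × ℝ => u₁ q.1 q.2) (univ ×ˢ Ici 0))
    (hu₂ : ContDiffOn ℝ (⊤ : ℕ∞) (fun q : (Fin 4 → ℝ) × ℝ => u₂ q.1 q.2) (univ ×ˢ Ici 0))
    (hp₁ : ContDiffOn ℝ (⊤ : ℕ∞) (fun q : (Fin 4 → ℝ) × ℝ => p₁ q.1 q.2) (univ ×ˢ Ici 0))
    (hp₂ : ContDiffOn ℝ (⊤ : ℕ∞) (fun q : (Fin 4 → ℝ) × ℝ => p₂ q.1 q.2) (univ ×ˢ Ici 0))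
    (hsupp₁ : ∀ t : ℝ, 0 ≤ t → tsupport (fun x => u₁ x t) ⊆ K)
    (hsupp₂ : ∀ t : ℝ, 0 ≤ t → tsupport (fun x => u₂ x t) ⊆ K)
    (hdiv₁ : ∀ x ∈ Ω, ∀ t : ℝ, 0 ≤ t →
      ∑ i : Fin 4, fderiv ℝ (fun y => u₁ y t i) x (Pi.single i 1) = 0)
    (hdiv₂ : ∀ x ∈ Ω, ∀ t : ℝ, 0 ≤ t →
      ∑ i : Fin 4, fderiv ℝ (fun y => u₂ y t i) x (Pi.single i 1) = 0)
    (hNS₁ : ∀ x ∈ Ω, ∀ t : ℝ, 0 < t → ∀ j : Fin 4,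
      deriv (fun s => u₁ x s j) t
        + ∑ i : Fin 4, u₁ x t i * fderiv ℝ (fun y => u₁ y t j) x (Pi.single i 1)
        - ν * ∑ i : Fin 4,
            fderiv ℝ (fun y => fderiv ℝ (fun z => u₁ z t j) y (Pi.single i 1)) x (Pi.single i 1)
        + fderiv ℝ (fun y => p₁ y t) x (Pi.single j 1) = 0)
    (hNS₂ : ∀ x ∈ Ω, ∀ t : ℝ, 0 < t → ∀ j : Fin 4,
      deriv (fun s => u₂ x s j) t
        + ∑ i : Fin 4, u₂ x t i * fderiv ℝ (fun y => u₂ y t j) x (Pi.single i 1)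
        - ν * ∑ i : Fin 4,
            fderiv ℝ (fun y => fderiv ℝ (fun z => u₂ z t j) y (Pi.single i 1)) x (Pi.single i 1)
        + fderiv ℝ (fun y => p₂ y t) x (Pi.single j 1) = 0)
    (hinit : ∀ x, u₁ x 0 = u₂ x 0)
    (hsmall : ∀ t : ℝ, 0 ≤ t →
      0 ≤ ν - 9 * Real.sqrt (∑ i : Fin 4, ∑ j : Fin 4, ∫ x in Ω,
        (fderiv ℝ (fun y => u₂ y t j) x (Pi.single i 1)) ^ 2)) :
    ∀ t : ℝ, 0 ≤ t → ∀ x, u₁ x t = u₂ x t := by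
  -- the energy at time 0 vanishes
  have hE0 : nsEng u₁ u₂ 0 = 0 := by
    have : ∀ x : E4, nsRho u₁ u₂ 0 x = 0 := by
      intro x
      unfold nsRho
      apply Finset.sum_eq_zero
      intro j _
      rw [hinit x]
      simp
    unfold nsEng
    simp only [this, integral_zero]
  -- the energy vanishes for all times
  have hEngZero : ∀ t : ℝ, 0 ≤ t → nsEng u₁ u₂ t = 0 := by
    intro t ht
    rcases eq_or_lt_of_le ht with h0 | htpos
    · rw [← h0]; exact hE0
    -- uniform bound on the first derivatives of u₁ on K × [0, t+1]
    set T : ℝ := t + 1 with hT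
    have hT0 : (0:ℝ) < T := by linarith
    have htT : t < T := by linarith
    have hg : ContinuousOn (fun q : E4 × ℝ => (fun i j => nsD u₁ q.2 i j q.1 :
        Fin 4 → Fin 4 → ℝ)) (K ×ˢ Icc 0 T) := by
      apply continuousOn_pi.mpr
      intro i
      apply continuousOn_pi.mpr
      intro j
      exact (ns_spatial_continuousOn hu₁ j (Pi.single i 1)).mono
        (prod_mono (subset_univ K) Icc_subset_Ici_self)
    obtain ⟨C, hC⟩ := (hK.prod isCompact_Icc).exists_bound_of_continuousOn hg
    set M : ℝ := max C 0 with hMdef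
    have hM0 : (0:ℝ) ≤ M := le_max_right _ _
    have hM : ∀ s ∈ Icc (0:ℝ) T, ∀ x ∈ K, ∀ i j : Fin 4, |nsD u₁ s i j x| ≤ M := by
      intro s hs x hx i j
      have h1 := hC (x, s) ⟨hx, hs⟩
      have h2 : |nsD u₁ s i j x| ≤ ‖(fun i j => nsD u₁ s i j x : Fin 4 → Fin 4 → ℝ)‖ := by
        refine le_trans ?_ (norm_le_pi_norm (fun i j => nsD u₁ s i j x) i)
        simpa [Real.norm_eq_abs] using
          norm_le_pi_norm (fun j => nsD u₁ s i j x) j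
      exact le_trans (le_trans h2 h1) (le_max_left _ _)
    -- Gronwall on [a, t] for each 0 < a ≤ t
    have gron : ∀ a : ℝ, 0 < a → a ≤ t →
        nsEng u₁ u₂ t ≤ nsEng u₁ u₂ a * Real.exp (8 * M * (t - a)) := by
      intro a ha hat
      have hcont : ContinuousOn (nsEng u₁ u₂) (Icc a t) :=
        (ns_eng_contOn hK hu₁ hu₂ hsupp₁ hsupp₂ hT0).mono
          (Icc_subset_Icc ha.le htT.le)
      have hgron := le_gronwallBound_of_liminf_deriv_right_le
        (f := nsEng u₁ u₂) (f' := fun s => ∫ x, nsDval u₁ u₂ s x)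
        (δ := nsEng u₁ u₂ a) (K := 8 * M) (ε := 0) (a := a) (b := t)
        hcont ?slope le_rfl ?bound
      · have := hgron t ⟨hat, le_refl t⟩
        rwa [gronwallBound_ε0] at this
      case slope =>
        intro s hs r hr
        have hd : HasDerivAt (nsEng u₁ u₂) (∫ x, nsDval u₁ u₂ s x) s :=
          ns_eng_hasDeriv hK hu₁ hu₂ hsupp₁ hsupp₂ (lt_of_lt_of_le ha hs.1)
        have := (hd.hasDerivWithinAt (s := Ici s)).liminf_right_slope_le hr
        apply this.mono
        intro z hz
        simpa [slope_def_field, div_eq_inv_mul] using hz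
      case bound =>
        intro s hs
        have hspos : 0 < s := lt_of_lt_of_le ha hs.1
        have hkey := ns_key hK hKΩ hu₁ hu₂ hp₁ hp₂ hsupp₁ hsupp₂ hdiv₁ hdiv₂ hNS₁ hNS₂
          hν.le hspos hM0 (hM s ⟨hspos.le, le_trans hs.2.le htT.le⟩)
        rw [add_zero]
        exact hkey
    -- let a → 0⁺
    have hcont0 : ContinuousOn (nsEng u₁ u₂) (Icc 0 T) :=
      ns_eng_contOn hK hu₁ hu₂ hsupp₁ hsupp₂ hT0
    have htend : Filter.Tendsto (fun a => nsEng u₁ u₂ a * Real.exp (8 * M * (t - a)))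
        (nhdsWithin 0 (Ioi 0)) (nhds 0) := by
      have h1 : Filter.Tendsto (nsEng u₁ u₂) (nhdsWithin 0 (Icc 0 T)) (nhds 0) := by
        have := hcont0 0 ⟨le_refl 0, hT0.le⟩
        rw [ContinuousWithinAt, hE0] at this
        exact this
      have h2 : Filter.Tendsto (nsEng u₁ u₂) (nhdsWithin 0 (Ioi 0)) (nhds 0) := by
        refine h1.mono_left ?_
        rw [← nhdsWithin_Ioc_eq_nhdsGT hT0]
        exact nhdsWithin_mono 0 Ioc_subset_Icc_self
      have h3 : Filter.Tendsto (fun a : ℝ => Real.exp (8 * M * (t - a)))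
          (nhdsWithin 0 (Ioi 0)) (nhds (Real.exp (8 * M * t))) := by
        have : Continuous (fun a : ℝ => Real.exp (8 * M * (t - a))) :=
          Real.continuous_exp.comp (continuous_const.mul (continuous_const.sub continuous_id))
        have h4 := this.tendsto 0
        simp only [sub_zero] at h4
        exact h4.mono_left nhdsWithin_le_nhds
      have := h2.mul h3
      simpa using this
    have hup : ∀ᶠ a in nhdsWithin 0 (Ioi 0),
        nsEng u₁ u₂ t ≤ nsEng u₁ u₂ a * Real.exp (8 * M * (t - a)) := by
      filter_upwards [Ioc_mem_nhdsGT_of_mem (by constructor <;> [exact le_refl 0; exact htpos])]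
        with a ha
      exact gron a ha.1 ha.2
    have hle : nsEng u₁ u₂ t ≤ 0 := ge_of_tendsto htend hup
    exact le_antisymm hle (ns_eng_nonneg t)
  -- pointwise conclusion
  intro t ht x
  have hE := hEngZero t ht
  have hae : nsRho u₁ u₂ t =ᵐ[(volume : Measure E4)] 0 :=
    (integral_eq_zero_iff_of_nonneg (ns_rho_nonneg t)
      (ns_rho_int hK hu₁ hu₂ hsupp₁ hsupp₂ ht)).mp hE
  have heq : nsRho u₁ u₂ t = 0 :=
    ((ns_rho_cont hu₁ hu₂ ht).ae_eq_iff_eq (volume : Measure E4) continuous_const).mp hae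
  have hx0 : nsRho u₁ u₂ t x = 0 := congrFun heq x
  funext j
  have hterm : (u₁ x t j - u₂ x t j)^2 = 0 := by
    have hnn : ∀ i ∈ (Finset.univ : Finset (Fin 4)), (0:ℝ) ≤ (u₁ x t i - u₂ x t i)^2 :=
      fun i _ => sq_nonneg _
    have := (Finset.sum_eq_zero_iff_of_nonneg hnn).mp hx0 j (Finset.mem_univ j)
    exact this
  have := pow_eq_zero_iff (n := 2) (by norm_num) |>.mp hterm
  linarith [this]
end
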